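/- arXiv:2111.03479 — 2 statements merged into one kernel-verified Lean document; each statement's English description precedes it below -/
import Mathlib

section
/- If G is a graph containing a vertex v of degree 3 whose three neighbors all have degree 3, then no subdivision of G is representable in Av(41352). -/
/-- A monotone gridding matrix with `k` columns and `ℓ` rows (rows numbered bottom to
top): entry `none` is empty, `some true` is the class Inc, `some false` is Dec.
`M i j` is the entry in column `i`, row `j`. -/
abbrev GMatrix (k ℓ : ℕ) := Fin k → Fin ℓ → Option Bool

/-- The cell graph of a gridding matrix: the nonempty entries are the (effective)
vertices; two nonempty entries are adjacent if they share a row or a column and no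
nonempty entry lies strictly between them. -/
def cellGraph {k ℓ : ℕ} (M : GMatrix k ℓ) : SimpleGraph (Fin k × Fin ℓ) :=
  SimpleGraph.fromRel (fun x y =>
    M x.1 x.2 ≠ none ∧ M y.1 y.2 ≠ none ∧
    ((x.1 = y.1 ∧ x.2 < y.2 ∧ ∀ j, x.2 < j → j < y.2 → M x.1 j = none) ∨
     (x.2 = y.2 ∧ x.1 < y.1 ∧ ∀ i, x.1 < i → i < y.1 → M i x.2 = none)))
/-- The point at position `p` of the permutation `π` lies in the `(i,j)`-cell of the
gridding given by column boundaries `c` and row boundaries `r`. -/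
def InCell {n k ℓ : ℕ} (c : Fin (k + 1) → ℕ) (r : Fin (ℓ + 1) → ℕ)
    (π : Equiv.Perm (Fin n)) (p : Fin n) (i : Fin k) (j : Fin ℓ) : Prop :=
  c i.castSucc ≤ p.val ∧ p.val < c i.succ ∧
  r j.castSucc ≤ (π p).val ∧ (π p).val < r j.succ

/-- `(c, r)` is an `M`-gridding of the permutation `π`: every nonempty cell of the
gridding corresponds to a nonempty matrix entry, and the points in a cell with an
Inc (resp. Dec) entry form an increasing (resp. decreasing) pattern. -/
def IsGridding {n k ℓ : ℕ} (M : GMatrix k ℓ) (π : Equiv.Perm (Fin n))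
    (c : Fin (k + 1) → ℕ) (r : Fin (ℓ + 1) → ℕ) : Prop :=
  Monotone c ∧ Monotone r ∧ c 0 = 0 ∧ c (Fin.last k) = n ∧
  r 0 = 0 ∧ r (Fin.last ℓ) = n ∧
  ∀ (i : Fin k) (j : Fin ℓ),
    (∀ p, InCell c r π p i j → M i j ≠ none) ∧
    (M i j = some true → ∀ p q, InCell c r π p i j → InCell c r π q i j →
      p < q → π p < π q) ∧
    (M i j = some false → ∀ p q, InCell c r π p i j → InCell c r π q i j →
      p < q → π q < π p)

/-- The monotone grid class of `M`, at length `n`: permutations admitting an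
`M`-gridding. -/
def GridClass {k ℓ : ℕ} (M : GMatrix k ℓ) (n : ℕ) : Set (Equiv.Perm (Fin n)) :=
  {π | ∃ c r, IsGridding M π c r}
/-- `π` contains the pattern `σ`: some subsequence of `π` is order-isomorphic to `σ`. -/
def Contains {n m : ℕ} (π : Equiv.Perm (Fin n)) (σ : Equiv.Perm (Fin m)) : Prop :=
  ∃ f : Fin m → Fin n, StrictMono f ∧ ∀ a b : Fin m, σ a < σ b ↔ π (f a) < π (f b)
/-- `H` is a subdivision of `G`: there is an injection `f` of the vertices of `G` into
those of `H` and, for each edge of `G`, a path in `H` between the images of its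
endpoints, such that these paths are internally disjoint from each other and from the
image of `f`, and such that every vertex and every edge of `H` comes from these paths
(or from `f`). -/
def IsSubdivision {VG VH : Type} (G : SimpleGraph VG) (H : SimpleGraph VH) : Prop :=
  ∃ f : VG → VH, Function.Injective f ∧
  ∃ p : ∀ a b : VG, G.Adj a b → H.Walk (f a) (f b),
    (∀ a b h, (p a b h).IsPath) ∧
    (∀ a b h, ∀ x ∈ (p a b h).support, x ≠ f a → x ≠ f b → ∀ c : VG, f c ≠ x) ∧
    (∀ a b h a' b' h', s(a, b) ≠ s(a', b') → ∀ x : VH,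
      x ∈ (p a b h).support → x ∈ (p a' b' h').support → x = f a ∨ x = f b) ∧
    (∀ y : VH, (∃ c : VG, f c = y) ∨ ∃ a b h, y ∈ (p a b h).support) ∧
    (∀ e ∈ H.edgeSet, ∃ a b h, e ∈ (p a b h).edges)

/-- The pattern 41352 (as a permutation of `Fin 5`, 0-indexed values `3,0,2,4,1`). -/
def perm41352 : Equiv.Perm (Fin 5) :=
  ⟨![3, 0, 2, 4, 1], ![1, 4, 2, 0, 3],
    by intro x; fin_cases x <;> rfl, by intro x; fin_cases x <;> rfl⟩


namespace Av41352

variable {k ℓ : ℕ}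

/-- Nonempty cell. -/
def NEc (M : GMatrix k ℓ) (x : Fin k × Fin ℓ) : Prop := M x.1 x.2 ≠ none

/-- `y` is directly above `x` (same column, `x` below `y`, nothing nonempty between). -/
def UpM (M : GMatrix k ℓ) (x y : Fin k × Fin ℓ) : Prop :=
  NEc M x ∧ NEc M y ∧ x.1 = y.1 ∧ x.2 < y.2 ∧ ∀ j, x.2 < j → j < y.2 → M x.1 j = none

/-- `y` is directly to the right of `x`. -/
def RightM (M : GMatrix k ℓ) (x y : Fin k × Fin ℓ) : Prop :=
  NEc M x ∧ NEc M y ∧ x.2 = y.2 ∧ x.1 < y.1 ∧ ∀ i, x.1 < i → i < y.1 → M i x.2 = none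

def Adj' (M : GMatrix k ℓ) (x y : Fin k × Fin ℓ) : Prop :=
  UpM M x y ∨ UpM M y x ∨ RightM M x y ∨ RightM M y x

lemma cellGraph_adj_iff (M : GMatrix k ℓ) (x y : Fin k × Fin ℓ) :
    (cellGraph M).Adj x y ↔ Adj' M x y := by
  unfold cellGraph Adj' UpM RightM NEc
  rw [SimpleGraph.fromRel_adj]
  constructor
  · rintro ⟨hne, (⟨h1, h2, (h3 | h3)⟩ | ⟨h1, h2, (h3 | h3)⟩)⟩
    · exact Or.inl ⟨h1, h2, h3⟩
    · exact Or.inr (Or.inr (Or.inl ⟨h1, h2, h3⟩))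
    · exact Or.inr (Or.inl ⟨h1, h2, h3⟩)
    · exact Or.inr (Or.inr (Or.inr ⟨h1, h2, h3⟩))
  · rintro (⟨h1, h2, h3, h4, h5⟩ | ⟨h1, h2, h3, h4, h5⟩ | ⟨h1, h2, h3, h4, h5⟩ | ⟨h1, h2, h3, h4, h5⟩)
    · exact ⟨by intro he; rw [he] at h4; exact lt_irrefl _ h4,
        Or.inl ⟨h1, h2, Or.inl ⟨h3, h4, h5⟩⟩⟩
    · exact ⟨by intro he; rw [he] at h4; exact lt_irrefl _ h4,
        Or.inr ⟨h1, h2, Or.inl ⟨h3, h4, h5⟩⟩⟩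
    · exact ⟨by intro he; rw [he] at h4; exact lt_irrefl _ h4,
        Or.inl ⟨h1, h2, Or.inr ⟨h3, h4, h5⟩⟩⟩
    · exact ⟨by intro he; rw [he] at h4; exact lt_irrefl _ h4,
        Or.inr ⟨h1, h2, Or.inr ⟨h3, h4, h5⟩⟩⟩


lemma up_unique {M : GMatrix k ℓ} {x y z : Fin k × Fin ℓ}
    (h1 : UpM M x y) (h2 : UpM M x z) : y = z := by
  obtain ⟨-, hy, hc1, hlt1, he1⟩ := h1
  obtain ⟨-, hz, hc2, hlt2, he2⟩ := h2
  rcases lt_trichotomy y.2 z.2 with h | h | h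
  · have := he2 y.2 hlt1 h
    rw [hc1] at this
    exact absurd this hy
  · exact Prod.ext (hc1.symm.trans hc2) h
  · have := he1 z.2 hlt2 h
    rw [hc2] at this
    exact absurd this hz

lemma down_unique {M : GMatrix k ℓ} {x y z : Fin k × Fin ℓ}
    (h1 : UpM M y x) (h2 : UpM M z x) : y = z := by
  obtain ⟨hy, -, hc1, hlt1, he1⟩ := h1
  obtain ⟨hz, -, hc2, hlt2, he2⟩ := h2
  rcases lt_trichotomy y.2 z.2 with h | h | h
  · have := he1 z.2 h hlt2
    rw [hc1, ← hc2] at this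
    exact absurd this hz
  · exact Prod.ext (hc1.trans hc2.symm) h
  · have := he2 y.2 h hlt1
    rw [hc2, ← hc1] at this
    exact absurd this hy

lemma right_unique {M : GMatrix k ℓ} {x y z : Fin k × Fin ℓ}
    (h1 : RightM M x y) (h2 : RightM M x z) : y = z := by
  obtain ⟨-, hy, hc1, hlt1, he1⟩ := h1
  obtain ⟨-, hz, hc2, hlt2, he2⟩ := h2
  rcases lt_trichotomy y.1 z.1 with h | h | h
  · have := he2 y.1 hlt1 h
    rw [hc1] at this
    exact absurd this hy
  · exact Prod.ext h (hc1.symm.trans hc2)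
  · have := he1 z.1 hlt2 h
    rw [hc2] at this
    exact absurd this hz

lemma left_unique {M : GMatrix k ℓ} {x y z : Fin k × Fin ℓ}
    (h1 : RightM M y x) (h2 : RightM M z x) : y = z := by
  obtain ⟨hy, -, hc1, hlt1, he1⟩ := h1
  obtain ⟨hz, -, hc2, hlt2, he2⟩ := h2
  rcases lt_trichotomy y.1 z.1 with h | h | h
  · have := he1 z.1 h hlt2
    rw [hc1, ← hc2] at this
    exact absurd this hz
  · exact Prod.ext h (hc1.trans hc2.symm)
  · have := he2 y.1 h hlt1
    rw [hc2, ← hc1] at this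
    exact absurd this hy

end Av41352
namespace Av41352
variable {k ℓ : ℕ}

lemma card_lt_fin5 : ∀ t : Fin 5, (Finset.univ.filter (fun s => s < t)).card = t.val := by decide
lemma card_le_fin5 : ∀ t : Fin 5, (Finset.univ.filter (fun s => s ≤ t)).card = t.val + 1 := by decide
lemma card_plt : ∀ t : Fin 5,
    (Finset.univ.filter (fun s => perm41352 s < perm41352 t)).card = (perm41352 t).val := by decide
lemma card_ple : ∀ t : Fin 5,
    (Finset.univ.filter (fun s => perm41352 s ≤ perm41352 t)).card = (perm41352 t).val + 1 := by decide

/-- Column-boundary counting function. -/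
def cB (cl : Fin 5 → Fin k × Fin ℓ) (m : ℕ) : ℕ :=
  (Finset.univ.filter (fun t => ((cl t).1 : ℕ) < m)).card

/-- Row-boundary counting function. -/
def rB (cl : Fin 5 → Fin k × Fin ℓ) (m : ℕ) : ℕ :=
  (Finset.univ.filter (fun t => ((cl t).2 : ℕ) < m)).card

lemma cB_mono (cl : Fin 5 → Fin k × Fin ℓ) {m1 m2 : ℕ} (h : m1 ≤ m2) : cB cl m1 ≤ cB cl m2 := by
  apply Finset.card_le_card
  intro x hx
  simp only [Finset.mem_filter, Finset.mem_univ, true_and] at hx ⊢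
  omega

lemma rB_mono (cl : Fin 5 → Fin k × Fin ℓ) {m1 m2 : ℕ} (h : m1 ≤ m2) : rB cl m1 ≤ rB cl m2 := by
  apply Finset.card_le_card
  intro x hx
  simp only [Finset.mem_filter, Finset.mem_univ, true_and] at hx ⊢
  omega

/-- The key embedding lemma. -/
lemma embed (M : GMatrix k ℓ)
    (hav : ∀ n : ℕ, ∀ π ∈ GridClass M n, ¬ Contains π perm41352)
    (cl : Fin 5 → Fin k × Fin ℓ)
    (hne : ∀ t, M (cl t).1 (cl t).2 ≠ none)
    (hcol : ∀ t t' : Fin 5, t < t' → ((cl t).1 : ℕ) ≤ ((cl t').1 : ℕ))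
    (hrow : ∀ t t' : Fin 5, perm41352 t < perm41352 t' → ((cl t).2 : ℕ) ≤ ((cl t').2 : ℕ))
    (hmono : ∀ t t' : Fin 5, t < t' → cl t = cl t' →
      (M (cl t).1 (cl t).2 = some true → perm41352 t < perm41352 t') ∧
      (M (cl t).1 (cl t).2 = some false → perm41352 t' < perm41352 t)) : False := by
  classical
  have key1 : ∀ t : Fin 5, cB cl ((cl t).1 : ℕ) ≤ t.val := by
    intro t
    rw [← card_lt_fin5 t]
    apply Finset.card_le_card
    intro s hs
    simp only [Finset.mem_filter, Finset.mem_univ, true_and] at hs ⊢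
    rcases lt_trichotomy s t with h | h | h
    · exact h
    · subst h; omega
    · exact absurd (hcol t s h) (by omega)
  have key2 : ∀ t : Fin 5, t.val < cB cl (((cl t).1 : ℕ) + 1) := by
    intro t
    have hsub : (Finset.univ.filter (fun s => s ≤ t)).card ≤ cB cl (((cl t).1 : ℕ) + 1) := by
      apply Finset.card_le_card
      intro s hs
      simp only [Finset.mem_filter, Finset.mem_univ, true_and] at hs ⊢
      rcases eq_or_lt_of_le hs with he | hl
      · subst he; omega
      · have := hcol s t hl; omega
    rw [card_le_fin5 t] at hsub
    omega
  have keyR1 : ∀ t : Fin 5, rB cl ((cl t).2 : ℕ) ≤ (perm41352 t).val := by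
    intro t
    rw [← card_plt t]
    apply Finset.card_le_card
    intro s hs
    simp only [Finset.mem_filter, Finset.mem_univ, true_and] at hs ⊢
    rcases lt_trichotomy (perm41352 s) (perm41352 t) with h | h | h
    · exact h
    · have : s = t := perm41352.injective h
      subst this; omega
    · exact absurd (hrow t s h) (by omega)
  have keyR2 : ∀ t : Fin 5, (perm41352 t).val < rB cl (((cl t).2 : ℕ) + 1) := by
    intro t
    have hsub : (Finset.univ.filter (fun s => perm41352 s ≤ perm41352 t)).card ≤
        rB cl (((cl t).2 : ℕ) + 1) := by
      apply Finset.card_le_card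
      intro s hs
      simp only [Finset.mem_filter, Finset.mem_univ, true_and] at hs ⊢
      rcases eq_or_lt_of_le hs with he | hl
      · have : s = t := perm41352.injective he
        subst this; omega
      · have := hrow s t hl; omega
    rw [card_ple t] at hsub
    omega
  have hpin : ∀ (p : Fin 5) (i : Fin k) (j : Fin ℓ),
      InCell (fun m => cB cl m.val) (fun m => rB cl m.val) perm41352 p i j →
      i = (cl p).1 ∧ j = (cl p).2 := by
    intro p i j hIn
    obtain ⟨h1, h2, h3, h4⟩ := hIn
    simp only [Fin.coe_castSucc, Fin.val_succ] at h1 h2 h3 h4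
    have hi : (i : ℕ) = ((cl p).1 : ℕ) := by
      rcases lt_trichotomy (i : ℕ) ((cl p).1 : ℕ) with h | h | h
      · have h5 : cB cl ((i:ℕ)+1) ≤ cB cl ((cl p).1 : ℕ) := cB_mono cl (by omega)
        have := key1 p; omega
      · exact h
      · have h5 : cB cl (((cl p).1:ℕ)+1) ≤ cB cl (i:ℕ) := cB_mono cl (by omega)
        have := key2 p; omega
    have hj : (j : ℕ) = ((cl p).2 : ℕ) := by
      rcases lt_trichotomy (j : ℕ) ((cl p).2 : ℕ) with h | h | h
      · have h5 : rB cl ((j:ℕ)+1) ≤ rB cl ((cl p).2 : ℕ) := rB_mono cl (by omega)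
        have := keyR1 p; omega
      · exact h
      · have h5 : rB cl (((cl p).2:ℕ)+1) ≤ rB cl (j:ℕ) := rB_mono cl (by omega)
        have := keyR2 p; omega
    exact ⟨Fin.ext hi, Fin.ext hj⟩
  have hmem : perm41352 ∈ GridClass M 5 := by
    refine ⟨fun m => cB cl m.val, fun m => rB cl m.val, ?_, ?_, ?_, ?_, ?_, ?_, ?_⟩
    · intro m1 m2 h; exact cB_mono cl h
    · intro m1 m2 h; exact rB_mono cl h
    · simp [cB]
    · show cB cl (Fin.last k).val = 5
      rw [Fin.val_last, cB, Finset.filter_true_of_mem (fun t _ => (cl t).1.isLt)]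
      simp
    · simp [rB]
    · show rB cl (Fin.last ℓ).val = 5
      rw [Fin.val_last, rB, Finset.filter_true_of_mem (fun t _ => (cl t).2.isLt)]
      simp
    · intro i j
      refine ⟨?_, ?_, ?_⟩
      · intro p hp
        obtain ⟨hi, hj⟩ := hpin p i j hp
        rw [hi, hj]
        exact hne p
      · intro hT p q hp hq hpq
        obtain ⟨hi1, hj1⟩ := hpin p i j hp
        obtain ⟨hi2, hj2⟩ := hpin q i j hq
        have hcc : cl p = cl q := Prod.ext (hi1.symm.trans hi2) (hj1.symm.trans hj2)
        refine (hmono p q hpq hcc).1 ?_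
        rw [← hi1, ← hj1]
        exact hT
      · intro hF p q hp hq hpq
        obtain ⟨hi1, hj1⟩ := hpin p i j hp
        obtain ⟨hi2, hj2⟩ := hpin q i j hq
        have hcc : cl p = cl q := Prod.ext (hi1.symm.trans hi2) (hj1.symm.trans hj2)
        refine (hmono p q hpq hcc).2 ?_
        rw [← hi1, ← hj1]
        exact hF
  exact hav 5 perm41352 hmem ⟨id, strictMono_id, fun a b => Iff.rfl⟩

end Av41352
namespace Av41352
variable {k ℓ : ℕ}

def q5 {α : Type*} (a b c d e : α) : Fin 5 → α := fun t =>
  match t with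
  | ⟨0,_⟩ => a
  | ⟨1,_⟩ => b
  | ⟨2,_⟩ => c
  | ⟨3,_⟩ => d
  | ⟨_+4,_⟩ => e

@[simp] lemma q5_0 {α : Type*} (a b c d e : α) (h : (0:ℕ) < 5) : q5 a b c d e ⟨0,h⟩ = a := rfl
@[simp] lemma q5_1 {α : Type*} (a b c d e : α) (h : (1:ℕ) < 5) : q5 a b c d e ⟨1,h⟩ = b := rfl
@[simp] lemma q5_2 {α : Type*} (a b c d e : α) (h : (2:ℕ) < 5) : q5 a b c d e ⟨2,h⟩ = c := rfl
@[simp] lemma q5_3 {α : Type*} (a b c d e : α) (h : (3:ℕ) < 5) : q5 a b c d e ⟨3,h⟩ = d := rfl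
@[simp] lemma q5_4 {α : Type*} (a b c d e : α) (h : (4:ℕ) < 5) : q5 a b c d e ⟨4,h⟩ = e := rfl

@[simp] lemma p41_0 (h : (0:ℕ) < 5) : perm41352 ⟨0,h⟩ = ⟨3, by omega⟩ := rfl
@[simp] lemma p41_1 (h : (1:ℕ) < 5) : perm41352 ⟨1,h⟩ = ⟨0, by omega⟩ := rfl
@[simp] lemma p41_2 (h : (2:ℕ) < 5) : perm41352 ⟨2,h⟩ = ⟨2, by omega⟩ := rfl
@[simp] lemma p41_3 (h : (3:ℕ) < 5) : perm41352 ⟨3,h⟩ = ⟨4, by omega⟩ := rfl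
@[simp] lemma p41_4 (h : (4:ℕ) < 5) : perm41352 ⟨4,h⟩ = ⟨1, by omega⟩ := rfl

lemma chainCol (f : Fin 5 → ℕ) (h0 : f ⟨0, by omega⟩ ≤ f ⟨1, by omega⟩)
    (h1 : f ⟨1, by omega⟩ ≤ f ⟨2, by omega⟩) (h2 : f ⟨2, by omega⟩ ≤ f ⟨3, by omega⟩)
    (h3 : f ⟨3, by omega⟩ ≤ f ⟨4, by omega⟩) :
    ∀ t t' : Fin 5, t < t' → f t ≤ f t' := by
  intro t t' h
  fin_cases t <;> fin_cases t' <;> simp_all only [Fin.mk_lt_mk] <;> omega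

lemma chainRow (g : Fin 5 → ℕ) (h0 : g ⟨1, by omega⟩ ≤ g ⟨4, by omega⟩)
    (h1 : g ⟨4, by omega⟩ ≤ g ⟨2, by omega⟩) (h2 : g ⟨2, by omega⟩ ≤ g ⟨0, by omega⟩)
    (h3 : g ⟨0, by omega⟩ ≤ g ⟨3, by omega⟩) :
    ∀ t t' : Fin 5, perm41352 t < perm41352 t' → g t ≤ g t' := by
  intro t t' h
  fin_cases t <;> fin_cases t' <;>
    simp_all only [p41_0, p41_1, p41_2, p41_3, p41_4, Fin.mk_lt_mk] <;> omega

lemma step1 (M : GMatrix k ℓ)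
    (hav : ∀ n : ℕ, ∀ π ∈ GridClass M n, ¬ Contains π perm41352)
    {P W C X : Fin k × Fin ℓ}
    (hPT : M P.1 P.2 = some true) (hWF : M W.1 W.2 = some false)
    (hPW : RightM M P W) (hWC : UpM M W C)
    (hX : Adj' M P X) (hXW : X ≠ W) : UpM M P X ∧ M X.1 X.2 = some false := by
  have fPWc : (P.1:ℕ) < W.1 := hPW.2.2.2.1
  have fPWr : (P.2:ℕ) = W.2 := congrArg Fin.val hPW.2.2.1
  have fWCc : (W.1:ℕ) = C.1 := congrArg Fin.val hWC.2.2.1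
  have fWCr : (W.2:ℕ) < C.2 := hWC.2.2.2.1
  rcases hX with hU | hD | hR | hL
  · cases hsx : M X.1 X.2 with
    | none => exact absurd hsx hU.2.1
    | some b =>
      cases b with
      | false => exact ⟨hU, rfl⟩
      | true =>
        exfalso
        have fPXc : (P.1:ℕ) = X.1 := congrArg Fin.val hU.2.2.1
        have fPXr : (P.2:ℕ) < X.2 := hU.2.2.2.1
        refine embed M hav (q5 X P P X W) ?_ ?_ ?_ ?_
        · intro t
          fin_cases t <;> simp only [q5_0, q5_1, q5_2, q5_3, q5_4]
          exacts [hU.2.1, hPW.1, hPW.1, hU.2.1, hPW.2.1]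
        · intro t t' h
          exact chainCol (fun t => (((q5 X P P X W) t).1 : ℕ)) (show (X.1:ℕ) ≤ (P.1:ℕ) from by omega) (show (P.1:ℕ) ≤ (P.1:ℕ) from by omega) (show (P.1:ℕ) ≤ (X.1:ℕ) from by omega) (show (X.1:ℕ) ≤ (W.1:ℕ) from by omega) t t' h
        · intro t t' h
          exact chainRow (fun t => (((q5 X P P X W) t).2 : ℕ)) (show (P.2:ℕ) ≤ (W.2:ℕ) from by omega) (show (W.2:ℕ) ≤ (P.2:ℕ) from by omega) (show (P.2:ℕ) ≤ (X.2:ℕ) from by omega) (show (X.2:ℕ) ≤ (X.2:ℕ) from by omega) t t' h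
        · intro t t' h hcc
          fin_cases t <;> fin_cases t' <;>
            simp_all only [q5_0, q5_1, q5_2, q5_3, q5_4, p41_0, p41_1, p41_2, p41_3, p41_4,
              Fin.mk_lt_mk, Prod.ext_iff, Fin.ext_iff] <;>
            first
              | omega
              | (constructor <;> intro hh <;> simp_all <;> omega)
  · exfalso
    have fXPc : (X.1:ℕ) = P.1 := congrArg Fin.val hD.2.2.1
    have fXPr : (X.2:ℕ) < P.2 := hD.2.2.2.1
    refine embed M hav (q5 P X W C W) ?_ ?_ ?_ ?_
    · intro t
      fin_cases t <;> simp only [q5_0, q5_1, q5_2, q5_3, q5_4]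
      exacts [hPW.1, hD.1, hPW.2.1, hWC.2.1, hPW.2.1]
    · intro t t' h
      exact chainCol (fun t => (((q5 P X W C W) t).1 : ℕ)) (show (P.1:ℕ) ≤ (X.1:ℕ) from by omega) (show (X.1:ℕ) ≤ (W.1:ℕ) from by omega) (show (W.1:ℕ) ≤ (C.1:ℕ) from by omega) (show (C.1:ℕ) ≤ (W.1:ℕ) from by omega) t t' h
    · intro t t' h
      exact chainRow (fun t => (((q5 P X W C W) t).2 : ℕ)) (show (X.2:ℕ) ≤ (W.2:ℕ) from by omega) (show (W.2:ℕ) ≤ (W.2:ℕ) from by omega) (show (W.2:ℕ) ≤ (P.2:ℕ) from by omega) (show (P.2:ℕ) ≤ (C.2:ℕ) from by omega) t t' h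
    · intro t t' h hcc
      fin_cases t <;> fin_cases t' <;>
        simp_all only [q5_0, q5_1, q5_2, q5_3, q5_4, p41_0, p41_1, p41_2, p41_3, p41_4,
          Fin.mk_lt_mk, Prod.ext_iff, Fin.ext_iff] <;>
        first
          | omega
          | (constructor <;> intro hh <;> simp_all <;> omega)
  · exact absurd (right_unique hR hPW) hXW
  · exfalso
    have fXPc : (X.1:ℕ) < P.1 := hL.2.2.2.1
    have fXPr : (X.2:ℕ) = P.2 := congrArg Fin.val hL.2.2.1
    refine embed M hav (q5 X P P W W) ?_ ?_ ?_ ?_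
    · intro t
      fin_cases t <;> simp only [q5_0, q5_1, q5_2, q5_3, q5_4]
      exacts [hL.1, hPW.1, hPW.1, hPW.2.1, hPW.2.1]
    · intro t t' h
      exact chainCol (fun t => (((q5 X P P W W) t).1 : ℕ)) (show (X.1:ℕ) ≤ (P.1:ℕ) from by omega) (show (P.1:ℕ) ≤ (P.1:ℕ) from by omega) (show (P.1:ℕ) ≤ (W.1:ℕ) from by omega) (show (W.1:ℕ) ≤ (W.1:ℕ) from by omega) t t' h
    · intro t t' h
      exact chainRow (fun t => (((q5 X P P W W) t).2 : ℕ)) (show (P.2:ℕ) ≤ (W.2:ℕ) from by omega) (show (W.2:ℕ) ≤ (P.2:ℕ) from by omega) (show (P.2:ℕ) ≤ (X.2:ℕ) from by omega) (show (X.2:ℕ) ≤ (W.2:ℕ) from by omega) t t' h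
    · intro t t' h hcc
      fin_cases t <;> fin_cases t' <;>
        simp_all only [q5_0, q5_1, q5_2, q5_3, q5_4, p41_0, p41_1, p41_2, p41_3, p41_4,
          Fin.mk_lt_mk, Prod.ext_iff, Fin.ext_iff] <;>
        first
          | omega
          | (constructor <;> intro hh <;> simp_all <;> omega)

lemma step2 (M : GMatrix k ℓ)
    (hav : ∀ n : ℕ, ∀ π ∈ GridClass M n, ¬ Contains π perm41352)
    {P X W Y : Fin k × Fin ℓ}
    (hPT : M P.1 P.2 = some true) (hXF : M X.1 X.2 = some false)
    (hPX : UpM M P X) (hPW : RightM M P W)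
    (hY : Adj' M X Y) (hYP : Y ≠ P) : RightM M X Y ∧ M Y.1 Y.2 = some true := by
  have fPXc : (P.1:ℕ) = X.1 := congrArg Fin.val hPX.2.2.1
  have fPXr : (P.2:ℕ) < X.2 := hPX.2.2.2.1
  have fPWc : (P.1:ℕ) < W.1 := hPW.2.2.2.1
  have fPWr : (P.2:ℕ) = W.2 := congrArg Fin.val hPW.2.2.1
  rcases hY with hU | hD | hR | hL
  · exfalso
    have fXYc : (X.1:ℕ) = Y.1 := congrArg Fin.val hU.2.2.1
    have fXYr : (X.2:ℕ) < Y.2 := hU.2.2.2.1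
    refine embed M hav (q5 X P P Y W) ?_ ?_ ?_ ?_
    · intro t
      fin_cases t <;> simp only [q5_0, q5_1, q5_2, q5_3, q5_4]
      exacts [hPX.2.1, hPX.1, hPX.1, hU.2.1, hPW.2.1]
    · intro t t' h
      exact chainCol (fun t => (((q5 X P P Y W) t).1 : ℕ)) (show (X.1:ℕ) ≤ (P.1:ℕ) from by omega) (show (P.1:ℕ) ≤ (P.1:ℕ) from by omega) (show (P.1:ℕ) ≤ (Y.1:ℕ) from by omega) (show (Y.1:ℕ) ≤ (W.1:ℕ) from by omega) t t' h
    · intro t t' h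
      exact chainRow (fun t => (((q5 X P P Y W) t).2 : ℕ)) (show (P.2:ℕ) ≤ (W.2:ℕ) from by omega) (show (W.2:ℕ) ≤ (P.2:ℕ) from by omega) (show (P.2:ℕ) ≤ (X.2:ℕ) from by omega) (show (X.2:ℕ) ≤ (Y.2:ℕ) from by omega) t t' h
    · intro t t' h hcc
      fin_cases t <;> fin_cases t' <;>
        simp_all only [q5_0, q5_1, q5_2, q5_3, q5_4, p41_0, p41_1, p41_2, p41_3, p41_4,
          Fin.mk_lt_mk, Prod.ext_iff, Fin.ext_iff] <;>
        first
          | omega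
          | (constructor <;> intro hh <;> simp_all <;> omega)
  · exact absurd (down_unique hD hPX) hYP
  · rcases le_or_gt (Y.1:ℕ) (W.1:ℕ) with hle | hgt
    · exfalso
      have fXYc : (X.1:ℕ) < Y.1 := hR.2.2.2.1
      have fXYr : (X.2:ℕ) = Y.2 := congrArg Fin.val hR.2.2.1
      refine embed M hav (q5 X P P Y W) ?_ ?_ ?_ ?_
      · intro t
        fin_cases t <;> simp only [q5_0, q5_1, q5_2, q5_3, q5_4]
        exacts [hPX.2.1, hPX.1, hPX.1, hR.2.1, hPW.2.1]
      · intro t t' h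
        exact chainCol (fun t => (((q5 X P P Y W) t).1 : ℕ)) (show (X.1:ℕ) ≤ (P.1:ℕ) from by omega) (show (P.1:ℕ) ≤ (P.1:ℕ) from by omega) (show (P.1:ℕ) ≤ (Y.1:ℕ) from by omega) (show (Y.1:ℕ) ≤ (W.1:ℕ) from by omega) t t' h
      · intro t t' h
        exact chainRow (fun t => (((q5 X P P Y W) t).2 : ℕ)) (show (P.2:ℕ) ≤ (W.2:ℕ) from by omega) (show (W.2:ℕ) ≤ (P.2:ℕ) from by omega) (show (P.2:ℕ) ≤ (X.2:ℕ) from by omega) (show (X.2:ℕ) ≤ (Y.2:ℕ) from by omega) t t' h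
      · intro t t' h hcc
        fin_cases t <;> fin_cases t' <;>
          simp_all only [q5_0, q5_1, q5_2, q5_3, q5_4, p41_0, p41_1, p41_2, p41_3, p41_4,
            Fin.mk_lt_mk, Prod.ext_iff, Fin.ext_iff] <;>
          first
            | omega
            | (constructor <;> intro hh <;> simp_all <;> omega)
    · cases hsy : M Y.1 Y.2 with
      | none => exact absurd hsy hR.2.1
      | some b =>
        cases b with
        | true => exact ⟨hR, rfl⟩
        | false =>
          exfalso
          have fXYc : (X.1:ℕ) < Y.1 := hR.2.2.2.1
          have fXYr : (X.2:ℕ) = Y.2 := congrArg Fin.val hR.2.2.1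
          refine embed M hav (q5 X P X Y Y) ?_ ?_ ?_ ?_
          · intro t
            fin_cases t <;> simp only [q5_0, q5_1, q5_2, q5_3, q5_4]
            exacts [hPX.2.1, hPX.1, hPX.2.1, hR.2.1, hR.2.1]
          · intro t t' h
            exact chainCol (fun t => (((q5 X P X Y Y) t).1 : ℕ)) (show (X.1:ℕ) ≤ (P.1:ℕ) from by omega) (show (P.1:ℕ) ≤ (X.1:ℕ) from by omega) (show (X.1:ℕ) ≤ (Y.1:ℕ) from by omega) (show (Y.1:ℕ) ≤ (Y.1:ℕ) from by omega) t t' h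
          · intro t t' h
            exact chainRow (fun t => (((q5 X P X Y Y) t).2 : ℕ)) (show (P.2:ℕ) ≤ (Y.2:ℕ) from by omega) (show (Y.2:ℕ) ≤ (X.2:ℕ) from by omega) (show (X.2:ℕ) ≤ (X.2:ℕ) from by omega) (show (X.2:ℕ) ≤ (Y.2:ℕ) from by omega) t t' h
          · intro t t' h hcc
            fin_cases t <;> fin_cases t' <;>
              simp_all only [q5_0, q5_1, q5_2, q5_3, q5_4, p41_0, p41_1, p41_2, p41_3, p41_4,
                Fin.mk_lt_mk, Prod.ext_iff, Fin.ext_iff] <;>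
              first
                | omega
                | (constructor <;> intro hh <;> simp_all <;> omega)
  · exfalso
    have fYXc : (Y.1:ℕ) < X.1 := hL.2.2.2.1
    have fYXr : (Y.2:ℕ) = X.2 := congrArg Fin.val hL.2.2.1
    refine embed M hav (q5 Y P P X W) ?_ ?_ ?_ ?_
    · intro t
      fin_cases t <;> simp only [q5_0, q5_1, q5_2, q5_3, q5_4]
      exacts [hL.1, hPX.1, hPX.1, hPX.2.1, hPW.2.1]
    · intro t t' h
      exact chainCol (fun t => (((q5 Y P P X W) t).1 : ℕ)) (show (Y.1:ℕ) ≤ (P.1:ℕ) from by omega) (show (P.1:ℕ) ≤ (P.1:ℕ) from by omega) (show (P.1:ℕ) ≤ (X.1:ℕ) from by omega) (show (X.1:ℕ) ≤ (W.1:ℕ) from by omega) t t' h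
    · intro t t' h
      exact chainRow (fun t => (((q5 Y P P X W) t).2 : ℕ)) (show (P.2:ℕ) ≤ (W.2:ℕ) from by omega) (show (W.2:ℕ) ≤ (P.2:ℕ) from by omega) (show (P.2:ℕ) ≤ (Y.2:ℕ) from by omega) (show (Y.2:ℕ) ≤ (X.2:ℕ) from by omega) t t' h
    · intro t t' h hcc
      fin_cases t <;> fin_cases t' <;>
        simp_all only [q5_0, q5_1, q5_2, q5_3, q5_4, p41_0, p41_1, p41_2, p41_3, p41_4,
          Fin.mk_lt_mk, Prod.ext_iff, Fin.ext_iff] <;>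
        first
          | omega
          | (constructor <;> intro hh <;> simp_all <;> omega)

lemma step3 (M : GMatrix k ℓ)
    (hav : ∀ n : ℕ, ∀ π ∈ GridClass M n, ¬ Contains π perm41352)
    {P X Y Z : Fin k × Fin ℓ}
    (hXF : M X.1 X.2 = some false) (hYT : M Y.1 Y.2 = some true)
    (hXY : RightM M X Y) (hPX : UpM M P X)
    (hZ : Adj' M Y Z) (hZX : Z ≠ X) : UpM M Z Y ∧ M Z.1 Z.2 = some false := by
  have fXYc : (X.1:ℕ) < Y.1 := hXY.2.2.2.1
  have fXYr : (X.2:ℕ) = Y.2 := congrArg Fin.val hXY.2.2.1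
  have fPXc : (P.1:ℕ) = X.1 := congrArg Fin.val hPX.2.2.1
  have fPXr : (P.2:ℕ) < X.2 := hPX.2.2.2.1
  rcases hZ with hU | hD | hR | hL
  · exfalso
    have fYZc : (Y.1:ℕ) = Z.1 := congrArg Fin.val hU.2.2.1
    have fYZr : (Y.2:ℕ) < Z.2 := hU.2.2.2.1
    refine embed M hav (q5 X P X Z Y) ?_ ?_ ?_ ?_
    · intro t
      fin_cases t <;> simp only [q5_0, q5_1, q5_2, q5_3, q5_4]
      exacts [hXY.1, hPX.1, hXY.1, hU.2.1, hXY.2.1]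
    · intro t t' h
      exact chainCol (fun t => (((q5 X P X Z Y) t).1 : ℕ)) (show (X.1:ℕ) ≤ (P.1:ℕ) from by omega) (show (P.1:ℕ) ≤ (X.1:ℕ) from by omega) (show (X.1:ℕ) ≤ (Z.1:ℕ) from by omega) (show (Z.1:ℕ) ≤ (Y.1:ℕ) from by omega) t t' h
    · intro t t' h
      exact chainRow (fun t => (((q5 X P X Z Y) t).2 : ℕ)) (show (P.2:ℕ) ≤ (Y.2:ℕ) from by omega) (show (Y.2:ℕ) ≤ (X.2:ℕ) from by omega) (show (X.2:ℕ) ≤ (X.2:ℕ) from by omega) (show (X.2:ℕ) ≤ (Z.2:ℕ) from by omega) t t' h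
    · intro t t' h hcc
      fin_cases t <;> fin_cases t' <;>
        simp_all only [q5_0, q5_1, q5_2, q5_3, q5_4, p41_0, p41_1, p41_2, p41_3, p41_4,
          Fin.mk_lt_mk, Prod.ext_iff, Fin.ext_iff] <;>
        first
          | omega
          | (constructor <;> intro hh <;> simp_all <;> omega)
  · rcases le_or_gt (P.2:ℕ) (Z.2:ℕ) with hle | hgt
    · exfalso
      have fZYc : (Z.1:ℕ) = Y.1 := congrArg Fin.val hD.2.2.1
      have fZYr : (Z.2:ℕ) < Y.2 := hD.2.2.2.1
      refine embed M hav (q5 X P X Y Z) ?_ ?_ ?_ ?_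
      · intro t
        fin_cases t <;> simp only [q5_0, q5_1, q5_2, q5_3, q5_4]
        exacts [hXY.1, hPX.1, hXY.1, hXY.2.1, hD.1]
      · intro t t' h
        exact chainCol (fun t => (((q5 X P X Y Z) t).1 : ℕ)) (show (X.1:ℕ) ≤ (P.1:ℕ) from by omega) (show (P.1:ℕ) ≤ (X.1:ℕ) from by omega) (show (X.1:ℕ) ≤ (Y.1:ℕ) from by omega) (show (Y.1:ℕ) ≤ (Z.1:ℕ) from by omega) t t' h
      · intro t t' h
        exact chainRow (fun t => (((q5 X P X Y Z) t).2 : ℕ)) (show (P.2:ℕ) ≤ (Z.2:ℕ) from by omega) (show (Z.2:ℕ) ≤ (X.2:ℕ) from by omega) (show (X.2:ℕ) ≤ (X.2:ℕ) from by omega) (show (X.2:ℕ) ≤ (Y.2:ℕ) from by omega) t t' h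
      · intro t t' h hcc
        fin_cases t <;> fin_cases t' <;>
          simp_all only [q5_0, q5_1, q5_2, q5_3, q5_4, p41_0, p41_1, p41_2, p41_3, p41_4,
            Fin.mk_lt_mk, Prod.ext_iff, Fin.ext_iff] <;>
          first
            | omega
            | (constructor <;> intro hh <;> simp_all <;> omega)
    · cases hsz : M Z.1 Z.2 with
      | none => exact absurd hsz hD.1
      | some b =>
        cases b with
        | false => exact ⟨hD, rfl⟩
        | true =>
          exfalso
          have fZYc : (Z.1:ℕ) = Y.1 := congrArg Fin.val hD.2.2.1
          have fZYr : (Z.2:ℕ) < Y.2 := hD.2.2.2.1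
          refine embed M hav (q5 X Z Y Y Z) ?_ ?_ ?_ ?_
          · intro t
            fin_cases t <;> simp only [q5_0, q5_1, q5_2, q5_3, q5_4]
            exacts [hXY.1, hD.1, hXY.2.1, hXY.2.1, hD.1]
          · intro t t' h
            exact chainCol (fun t => (((q5 X Z Y Y Z) t).1 : ℕ)) (show (X.1:ℕ) ≤ (Z.1:ℕ) from by omega) (show (Z.1:ℕ) ≤ (Y.1:ℕ) from by omega) (show (Y.1:ℕ) ≤ (Y.1:ℕ) from by omega) (show (Y.1:ℕ) ≤ (Z.1:ℕ) from by omega) t t' h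
          · intro t t' h
            exact chainRow (fun t => (((q5 X Z Y Y Z) t).2 : ℕ)) (show (Z.2:ℕ) ≤ (Z.2:ℕ) from by omega) (show (Z.2:ℕ) ≤ (Y.2:ℕ) from by omega) (show (Y.2:ℕ) ≤ (X.2:ℕ) from by omega) (show (X.2:ℕ) ≤ (Y.2:ℕ) from by omega) t t' h
          · intro t t' h hcc
            fin_cases t <;> fin_cases t' <;>
              simp_all only [q5_0, q5_1, q5_2, q5_3, q5_4, p41_0, p41_1, p41_2, p41_3, p41_4,
                Fin.mk_lt_mk, Prod.ext_iff, Fin.ext_iff] <;>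
              first
                | omega
                | (constructor <;> intro hh <;> simp_all <;> omega)
  · exfalso
    have fYZc : (Y.1:ℕ) < Z.1 := hR.2.2.2.1
    have fYZr : (Y.2:ℕ) = Z.2 := congrArg Fin.val hR.2.2.1
    refine embed M hav (q5 X P X Y Z) ?_ ?_ ?_ ?_
    · intro t
      fin_cases t <;> simp only [q5_0, q5_1, q5_2, q5_3, q5_4]
      exacts [hXY.1, hPX.1, hXY.1, hXY.2.1, hR.2.1]
    · intro t t' h
      exact chainCol (fun t => (((q5 X P X Y Z) t).1 : ℕ)) (show (X.1:ℕ) ≤ (P.1:ℕ) from by omega) (show (P.1:ℕ) ≤ (X.1:ℕ) from by omega) (show (X.1:ℕ) ≤ (Y.1:ℕ) from by omega) (show (Y.1:ℕ) ≤ (Z.1:ℕ) from by omega) t t' h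
    · intro t t' h
      exact chainRow (fun t => (((q5 X P X Y Z) t).2 : ℕ)) (show (P.2:ℕ) ≤ (Z.2:ℕ) from by omega) (show (Z.2:ℕ) ≤ (X.2:ℕ) from by omega) (show (X.2:ℕ) ≤ (X.2:ℕ) from by omega) (show (X.2:ℕ) ≤ (Y.2:ℕ) from by omega) t t' h
    · intro t t' h hcc
      fin_cases t <;> fin_cases t' <;>
        simp_all only [q5_0, q5_1, q5_2, q5_3, q5_4, p41_0, p41_1, p41_2, p41_3, p41_4,
          Fin.mk_lt_mk, Prod.ext_iff, Fin.ext_iff] <;>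
        first
          | omega
          | (constructor <;> intro hh <;> simp_all <;> omega)
  · exact absurd (left_unique hL hXY) hZX

lemma step4 (M : GMatrix k ℓ)
    (hav : ∀ n : ℕ, ∀ π ∈ GridClass M n, ¬ Contains π perm41352)
    {X Y Z T : Fin k × Fin ℓ}
    (hYT : M Y.1 Y.2 = some true) (hZF : M Z.1 Z.2 = some false)
    (hZY : UpM M Z Y) (hXY : RightM M X Y)
    (hT : Adj' M Z T) (hTY : T ≠ Y) : RightM M T Z ∧ M T.1 T.2 = some true := by
  have fZYc : (Z.1:ℕ) = Y.1 := congrArg Fin.val hZY.2.2.1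
  have fZYr : (Z.2:ℕ) < Y.2 := hZY.2.2.2.1
  have fXYc : (X.1:ℕ) < Y.1 := hXY.2.2.2.1
  have fXYr : (X.2:ℕ) = Y.2 := congrArg Fin.val hXY.2.2.1
  rcases hT with hU | hD | hR | hL
  · exact absurd (up_unique hU hZY) hTY
  · exfalso
    have fTZc : (T.1:ℕ) = Z.1 := congrArg Fin.val hD.2.2.1
    have fTZr : (T.2:ℕ) < Z.2 := hD.2.2.2.1
    refine embed M hav (q5 X T Y Y Z) ?_ ?_ ?_ ?_
    · intro t
      fin_cases t <;> simp only [q5_0, q5_1, q5_2, q5_3, q5_4]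
      exacts [hXY.1, hD.1, hXY.2.1, hXY.2.1, hZY.1]
    · intro t t' h
      exact chainCol (fun t => (((q5 X T Y Y Z) t).1 : ℕ)) (show (X.1:ℕ) ≤ (T.1:ℕ) from by omega) (show (T.1:ℕ) ≤ (Y.1:ℕ) from by omega) (show (Y.1:ℕ) ≤ (Y.1:ℕ) from by omega) (show (Y.1:ℕ) ≤ (Z.1:ℕ) from by omega) t t' h
    · intro t t' h
      exact chainRow (fun t => (((q5 X T Y Y Z) t).2 : ℕ)) (show (T.2:ℕ) ≤ (Z.2:ℕ) from by omega) (show (Z.2:ℕ) ≤ (Y.2:ℕ) from by omega) (show (Y.2:ℕ) ≤ (X.2:ℕ) from by omega) (show (X.2:ℕ) ≤ (Y.2:ℕ) from by omega) t t' h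
    · intro t t' h hcc
      fin_cases t <;> fin_cases t' <;>
        simp_all only [q5_0, q5_1, q5_2, q5_3, q5_4, p41_0, p41_1, p41_2, p41_3, p41_4,
          Fin.mk_lt_mk, Prod.ext_iff, Fin.ext_iff] <;>
        first
          | omega
          | (constructor <;> intro hh <;> simp_all <;> omega)
  · exfalso
    have fZTc : (Z.1:ℕ) < T.1 := hR.2.2.2.1
    have fZTr : (Z.2:ℕ) = T.2 := congrArg Fin.val hR.2.2.1
    refine embed M hav (q5 X Z Y Y T) ?_ ?_ ?_ ?_
    · intro t
      fin_cases t <;> simp only [q5_0, q5_1, q5_2, q5_3, q5_4]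
      exacts [hXY.1, hZY.1, hXY.2.1, hXY.2.1, hR.2.1]
    · intro t t' h
      exact chainCol (fun t => (((q5 X Z Y Y T) t).1 : ℕ)) (show (X.1:ℕ) ≤ (Z.1:ℕ) from by omega) (show (Z.1:ℕ) ≤ (Y.1:ℕ) from by omega) (show (Y.1:ℕ) ≤ (Y.1:ℕ) from by omega) (show (Y.1:ℕ) ≤ (T.1:ℕ) from by omega) t t' h
    · intro t t' h
      exact chainRow (fun t => (((q5 X Z Y Y T) t).2 : ℕ)) (show (Z.2:ℕ) ≤ (T.2:ℕ) from by omega) (show (T.2:ℕ) ≤ (Y.2:ℕ) from by omega) (show (Y.2:ℕ) ≤ (X.2:ℕ) from by omega) (show (X.2:ℕ) ≤ (Y.2:ℕ) from by omega) t t' h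
    · intro t t' h hcc
      fin_cases t <;> fin_cases t' <;>
        simp_all only [q5_0, q5_1, q5_2, q5_3, q5_4, p41_0, p41_1, p41_2, p41_3, p41_4,
          Fin.mk_lt_mk, Prod.ext_iff, Fin.ext_iff] <;>
        first
          | omega
          | (constructor <;> intro hh <;> simp_all <;> omega)
  · cases hst : M T.1 T.2 with
    | none => exact absurd hst hL.1
    | some b =>
      cases b with
      | true => exact ⟨hL, rfl⟩
      | false =>
        exfalso
        have fTZc : (T.1:ℕ) < Z.1 := hL.2.2.2.1
        have fTZr : (T.2:ℕ) = Z.2 := congrArg Fin.val hL.2.2.1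
        refine embed M hav (q5 T T Z Y Z) ?_ ?_ ?_ ?_
        · intro t
          fin_cases t <;> simp only [q5_0, q5_1, q5_2, q5_3, q5_4]
          exacts [hL.1, hL.1, hZY.1, hZY.2.1, hZY.1]
        · intro t t' h
          exact chainCol (fun t => (((q5 T T Z Y Z) t).1 : ℕ)) (show (T.1:ℕ) ≤ (T.1:ℕ) from by omega) (show (T.1:ℕ) ≤ (Z.1:ℕ) from by omega) (show (Z.1:ℕ) ≤ (Y.1:ℕ) from by omega) (show (Y.1:ℕ) ≤ (Z.1:ℕ) from by omega) t t' h
        · intro t t' h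
          exact chainRow (fun t => (((q5 T T Z Y Z) t).2 : ℕ)) (show (T.2:ℕ) ≤ (Z.2:ℕ) from by omega) (show (Z.2:ℕ) ≤ (Z.2:ℕ) from by omega) (show (Z.2:ℕ) ≤ (T.2:ℕ) from by omega) (show (T.2:ℕ) ≤ (Y.2:ℕ) from by omega) t t' h
        · intro t t' h hcc
          fin_cases t <;> fin_cases t' <;>
            simp_all only [q5_0, q5_1, q5_2, q5_3, q5_4, p41_0, p41_1, p41_2, p41_3, p41_4,
              Fin.mk_lt_mk, Prod.ext_iff, Fin.ext_iff] <;>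
            first
              | omega
              | (constructor <;> intro hh <;> simp_all <;> omega)

end Av41352
namespace Av41352
variable {k ℓ : ℕ}

lemma step1' (M : GMatrix k ℓ)
    (hav : ∀ n : ℕ, ∀ π ∈ GridClass M n, ¬ Contains π perm41352)
    {P W C X : Fin k × Fin ℓ}
    (hPT : M P.1 P.2 = some true) (hWF : M W.1 W.2 = some false)
    (hWP : RightM M W P) (hCW : UpM M C W)
    (hX : Adj' M P X) (hXW : X ≠ W) : UpM M X P ∧ M X.1 X.2 = some false := by
  have fWPc : (W.1:ℕ) < P.1 := hWP.2.2.2.1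
  have fWPr : (W.2:ℕ) = P.2 := congrArg Fin.val hWP.2.2.1
  have fCWc : (C.1:ℕ) = W.1 := congrArg Fin.val hCW.2.2.1
  have fCWr : (C.2:ℕ) < W.2 := hCW.2.2.2.1
  rcases hX with hU | hD | hR | hL
  · exfalso
    have fPXc : (P.1:ℕ) = X.1 := congrArg Fin.val hU.2.2.1
    have fPXr : (P.2:ℕ) < X.2 := hU.2.2.2.1
    refine embed M hav (q5 W C W X P) ?_ ?_ ?_ ?_
    · intro t
      fin_cases t <;> simp only [q5_0, q5_1, q5_2, q5_3, q5_4]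
      exacts [hWP.1, hCW.1, hWP.1, hU.2.1, hWP.2.1]
    · intro t t' h
      exact chainCol (fun t => (((q5 W C W X P) t).1 : ℕ)) (show (W.1:ℕ) ≤ (C.1:ℕ) from by omega) (show (C.1:ℕ) ≤ (W.1:ℕ) from by omega) (show (W.1:ℕ) ≤ (X.1:ℕ) from by omega) (show (X.1:ℕ) ≤ (P.1:ℕ) from by omega) t t' h
    · intro t t' h
      exact chainRow (fun t => (((q5 W C W X P) t).2 : ℕ)) (show (C.2:ℕ) ≤ (P.2:ℕ) from by omega) (show (P.2:ℕ) ≤ (W.2:ℕ) from by omega) (show (W.2:ℕ) ≤ (W.2:ℕ) from by omega) (show (W.2:ℕ) ≤ (X.2:ℕ) from by omega) t t' h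
    · intro t t' h hcc
      fin_cases t <;> fin_cases t' <;>
        simp_all only [q5_0, q5_1, q5_2, q5_3, q5_4, p41_0, p41_1, p41_2, p41_3, p41_4,
          Fin.mk_lt_mk, Prod.ext_iff, Fin.ext_iff] <;>
        first
          | omega
          | (constructor <;> intro hh <;> simp_all <;> omega)
  · cases hsx : M X.1 X.2 with
    | none => exact absurd hsx hD.1
    | some b =>
      cases b with
      | false => exact ⟨hD, rfl⟩
      | true =>
        exfalso
        have fXPc : (X.1:ℕ) = P.1 := congrArg Fin.val hD.2.2.1
        have fXPr : (X.2:ℕ) < P.2 := hD.2.2.2.1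
        refine embed M hav (q5 W X P P X) ?_ ?_ ?_ ?_
        · intro t
          fin_cases t <;> simp only [q5_0, q5_1, q5_2, q5_3, q5_4]
          exacts [hWP.1, hD.1, hWP.2.1, hWP.2.1, hD.1]
        · intro t t' h
          exact chainCol (fun t => (((q5 W X P P X) t).1 : ℕ)) (show (W.1:ℕ) ≤ (X.1:ℕ) from by omega) (show (X.1:ℕ) ≤ (P.1:ℕ) from by omega) (show (P.1:ℕ) ≤ (P.1:ℕ) from by omega) (show (P.1:ℕ) ≤ (X.1:ℕ) from by omega) t t' h
        · intro t t' h
          exact chainRow (fun t => (((q5 W X P P X) t).2 : ℕ)) (show (X.2:ℕ) ≤ (X.2:ℕ) from by omega) (show (X.2:ℕ) ≤ (P.2:ℕ) from by omega) (show (P.2:ℕ) ≤ (W.2:ℕ) from by omega) (show (W.2:ℕ) ≤ (P.2:ℕ) from by omega) t t' h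
        · intro t t' h hcc
          fin_cases t <;> fin_cases t' <;>
            simp_all only [q5_0, q5_1, q5_2, q5_3, q5_4, p41_0, p41_1, p41_2, p41_3, p41_4,
              Fin.mk_lt_mk, Prod.ext_iff, Fin.ext_iff] <;>
            first
              | omega
              | (constructor <;> intro hh <;> simp_all <;> omega)
  · exfalso
    have fPXc : (P.1:ℕ) < X.1 := hR.2.2.2.1
    have fPXr : (P.2:ℕ) = X.2 := congrArg Fin.val hR.2.2.1
    refine embed M hav (q5 W W P P X) ?_ ?_ ?_ ?_
    · intro t
      fin_cases t <;> simp only [q5_0, q5_1, q5_2, q5_3, q5_4]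
      exacts [hWP.1, hWP.1, hWP.2.1, hWP.2.1, hR.2.1]
    · intro t t' h
      exact chainCol (fun t => (((q5 W W P P X) t).1 : ℕ)) (show (W.1:ℕ) ≤ (W.1:ℕ) from by omega) (show (W.1:ℕ) ≤ (P.1:ℕ) from by omega) (show (P.1:ℕ) ≤ (P.1:ℕ) from by omega) (show (P.1:ℕ) ≤ (X.1:ℕ) from by omega) t t' h
    · intro t t' h
      exact chainRow (fun t => (((q5 W W P P X) t).2 : ℕ)) (show (W.2:ℕ) ≤ (X.2:ℕ) from by omega) (show (X.2:ℕ) ≤ (P.2:ℕ) from by omega) (show (P.2:ℕ) ≤ (W.2:ℕ) from by omega) (show (W.2:ℕ) ≤ (P.2:ℕ) from by omega) t t' h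
    · intro t t' h hcc
      fin_cases t <;> fin_cases t' <;>
        simp_all only [q5_0, q5_1, q5_2, q5_3, q5_4, p41_0, p41_1, p41_2, p41_3, p41_4,
          Fin.mk_lt_mk, Prod.ext_iff, Fin.ext_iff] <;>
        first
          | omega
          | (constructor <;> intro hh <;> simp_all <;> omega)
  · exact absurd (left_unique hL hWP) hXW

lemma step2' (M : GMatrix k ℓ)
    (hav : ∀ n : ℕ, ∀ π ∈ GridClass M n, ¬ Contains π perm41352)
    {P X W Y : Fin k × Fin ℓ}
    (hPT : M P.1 P.2 = some true) (hXF : M X.1 X.2 = some false)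
    (hXP : UpM M X P) (hWP : RightM M W P)
    (hY : Adj' M X Y) (hYP : Y ≠ P) : RightM M Y X ∧ M Y.1 Y.2 = some true := by
  have fXPc : (X.1:ℕ) = P.1 := congrArg Fin.val hXP.2.2.1
  have fXPr : (X.2:ℕ) < P.2 := hXP.2.2.2.1
  have fWPc : (W.1:ℕ) < P.1 := hWP.2.2.2.1
  have fWPr : (W.2:ℕ) = P.2 := congrArg Fin.val hWP.2.2.1
  rcases hY with hU | hD | hR | hL
  · exact absurd (up_unique hU hXP) hYP
  · exfalso
    have fYXc : (Y.1:ℕ) = X.1 := congrArg Fin.val hD.2.2.1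
    have fYXr : (Y.2:ℕ) < X.2 := hD.2.2.2.1
    refine embed M hav (q5 W Y P P X) ?_ ?_ ?_ ?_
    · intro t
      fin_cases t <;> simp only [q5_0, q5_1, q5_2, q5_3, q5_4]
      exacts [hWP.1, hD.1, hWP.2.1, hWP.2.1, hXP.1]
    · intro t t' h
      exact chainCol (fun t => (((q5 W Y P P X) t).1 : ℕ)) (show (W.1:ℕ) ≤ (Y.1:ℕ) from by omega) (show (Y.1:ℕ) ≤ (P.1:ℕ) from by omega) (show (P.1:ℕ) ≤ (P.1:ℕ) from by omega) (show (P.1:ℕ) ≤ (X.1:ℕ) from by omega) t t' h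
    · intro t t' h
      exact chainRow (fun t => (((q5 W Y P P X) t).2 : ℕ)) (show (Y.2:ℕ) ≤ (X.2:ℕ) from by omega) (show (X.2:ℕ) ≤ (P.2:ℕ) from by omega) (show (P.2:ℕ) ≤ (W.2:ℕ) from by omega) (show (W.2:ℕ) ≤ (P.2:ℕ) from by omega) t t' h
    · intro t t' h hcc
      fin_cases t <;> fin_cases t' <;>
        simp_all only [q5_0, q5_1, q5_2, q5_3, q5_4, p41_0, p41_1, p41_2, p41_3, p41_4,
          Fin.mk_lt_mk, Prod.ext_iff, Fin.ext_iff] <;>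
        first
          | omega
          | (constructor <;> intro hh <;> simp_all <;> omega)
  · exfalso
    have fXYc : (X.1:ℕ) < Y.1 := hR.2.2.2.1
    have fXYr : (X.2:ℕ) = Y.2 := congrArg Fin.val hR.2.2.1
    refine embed M hav (q5 W X P P Y) ?_ ?_ ?_ ?_
    · intro t
      fin_cases t <;> simp only [q5_0, q5_1, q5_2, q5_3, q5_4]
      exacts [hWP.1, hXP.1, hWP.2.1, hWP.2.1, hR.2.1]
    · intro t t' h
      exact chainCol (fun t => (((q5 W X P P Y) t).1 : ℕ)) (show (W.1:ℕ) ≤ (X.1:ℕ) from by omega) (show (X.1:ℕ) ≤ (P.1:ℕ) from by omega) (show (P.1:ℕ) ≤ (P.1:ℕ) from by omega) (show (P.1:ℕ) ≤ (Y.1:ℕ) from by omega) t t' h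
    · intro t t' h
      exact chainRow (fun t => (((q5 W X P P Y) t).2 : ℕ)) (show (X.2:ℕ) ≤ (Y.2:ℕ) from by omega) (show (Y.2:ℕ) ≤ (P.2:ℕ) from by omega) (show (P.2:ℕ) ≤ (W.2:ℕ) from by omega) (show (W.2:ℕ) ≤ (P.2:ℕ) from by omega) t t' h
    · intro t t' h hcc
      fin_cases t <;> fin_cases t' <;>
        simp_all only [q5_0, q5_1, q5_2, q5_3, q5_4, p41_0, p41_1, p41_2, p41_3, p41_4,
          Fin.mk_lt_mk, Prod.ext_iff, Fin.ext_iff] <;>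
        first
          | omega
          | (constructor <;> intro hh <;> simp_all <;> omega)
  · rcases le_or_gt (W.1:ℕ) (Y.1:ℕ) with hle | hgt
    · exfalso
      have fYXc : (Y.1:ℕ) < X.1 := hL.2.2.2.1
      have fYXr : (Y.2:ℕ) = X.2 := congrArg Fin.val hL.2.2.1
      refine embed M hav (q5 W Y P P X) ?_ ?_ ?_ ?_
      · intro t
        fin_cases t <;> simp only [q5_0, q5_1, q5_2, q5_3, q5_4]
        exacts [hWP.1, hL.1, hWP.2.1, hWP.2.1, hXP.1]
      · intro t t' h
        exact chainCol (fun t => (((q5 W Y P P X) t).1 : ℕ)) (show (W.1:ℕ) ≤ (Y.1:ℕ) from by omega) (show (Y.1:ℕ) ≤ (P.1:ℕ) from by omega) (show (P.1:ℕ) ≤ (P.1:ℕ) from by omega) (show (P.1:ℕ) ≤ (X.1:ℕ) from by omega) t t' h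
      · intro t t' h
        exact chainRow (fun t => (((q5 W Y P P X) t).2 : ℕ)) (show (Y.2:ℕ) ≤ (X.2:ℕ) from by omega) (show (X.2:ℕ) ≤ (P.2:ℕ) from by omega) (show (P.2:ℕ) ≤ (W.2:ℕ) from by omega) (show (W.2:ℕ) ≤ (P.2:ℕ) from by omega) t t' h
      · intro t t' h hcc
        fin_cases t <;> fin_cases t' <;>
          simp_all only [q5_0, q5_1, q5_2, q5_3, q5_4, p41_0, p41_1, p41_2, p41_3, p41_4,
            Fin.mk_lt_mk, Prod.ext_iff, Fin.ext_iff] <;>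
          first
            | omega
            | (constructor <;> intro hh <;> simp_all <;> omega)
    · cases hsy : M Y.1 Y.2 with
      | none => exact absurd hsy hL.1
      | some b =>
        cases b with
        | true => exact ⟨hL, rfl⟩
        | false =>
          exfalso
          have fYXc : (Y.1:ℕ) < X.1 := hL.2.2.2.1
          have fYXr : (Y.2:ℕ) = X.2 := congrArg Fin.val hL.2.2.1
          refine embed M hav (q5 Y Y X P X) ?_ ?_ ?_ ?_
          · intro t
            fin_cases t <;> simp only [q5_0, q5_1, q5_2, q5_3, q5_4]
            exacts [hL.1, hL.1, hXP.1, hWP.2.1, hXP.1]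
          · intro t t' h
            exact chainCol (fun t => (((q5 Y Y X P X) t).1 : ℕ)) (show (Y.1:ℕ) ≤ (Y.1:ℕ) from by omega) (show (Y.1:ℕ) ≤ (X.1:ℕ) from by omega) (show (X.1:ℕ) ≤ (P.1:ℕ) from by omega) (show (P.1:ℕ) ≤ (X.1:ℕ) from by omega) t t' h
          · intro t t' h
            exact chainRow (fun t => (((q5 Y Y X P X) t).2 : ℕ)) (show (Y.2:ℕ) ≤ (X.2:ℕ) from by omega) (show (X.2:ℕ) ≤ (X.2:ℕ) from by omega) (show (X.2:ℕ) ≤ (Y.2:ℕ) from by omega) (show (Y.2:ℕ) ≤ (P.2:ℕ) from by omega) t t' h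
          · intro t t' h hcc
            fin_cases t <;> fin_cases t' <;>
              simp_all only [q5_0, q5_1, q5_2, q5_3, q5_4, p41_0, p41_1, p41_2, p41_3, p41_4,
                Fin.mk_lt_mk, Prod.ext_iff, Fin.ext_iff] <;>
              first
                | omega
                | (constructor <;> intro hh <;> simp_all <;> omega)

lemma step3' (M : GMatrix k ℓ)
    (hav : ∀ n : ℕ, ∀ π ∈ GridClass M n, ¬ Contains π perm41352)
    {P X Y Z : Fin k × Fin ℓ}
    (hXF : M X.1 X.2 = some false) (hYT : M Y.1 Y.2 = some true)
    (hYX : RightM M Y X) (hXP : UpM M X P)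
    (hZ : Adj' M Y Z) (hZX : Z ≠ X) : UpM M Y Z ∧ M Z.1 Z.2 = some false := by
  have fYXc : (Y.1:ℕ) < X.1 := hYX.2.2.2.1
  have fYXr : (Y.2:ℕ) = X.2 := congrArg Fin.val hYX.2.2.1
  have fXPc : (X.1:ℕ) = P.1 := congrArg Fin.val hXP.2.2.1
  have fXPr : (X.2:ℕ) < P.2 := hXP.2.2.2.1
  rcases hZ with hU | hD | hR | hL
  · rcases le_or_gt (Z.2:ℕ) (P.2:ℕ) with hle | hgt
    · exfalso
      have fYZc : (Y.1:ℕ) = Z.1 := congrArg Fin.val hU.2.2.1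
      have fYZr : (Y.2:ℕ) < Z.2 := hU.2.2.2.1
      refine embed M hav (q5 Z Y X P X) ?_ ?_ ?_ ?_
      · intro t
        fin_cases t <;> simp only [q5_0, q5_1, q5_2, q5_3, q5_4]
        exacts [hU.2.1, hYX.1, hYX.2.1, hXP.2.1, hYX.2.1]
      · intro t t' h
        exact chainCol (fun t => (((q5 Z Y X P X) t).1 : ℕ)) (show (Z.1:ℕ) ≤ (Y.1:ℕ) from by omega) (show (Y.1:ℕ) ≤ (X.1:ℕ) from by omega) (show (X.1:ℕ) ≤ (P.1:ℕ) from by omega) (show (P.1:ℕ) ≤ (X.1:ℕ) from by omega) t t' h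
      · intro t t' h
        exact chainRow (fun t => (((q5 Z Y X P X) t).2 : ℕ)) (show (Y.2:ℕ) ≤ (X.2:ℕ) from by omega) (show (X.2:ℕ) ≤ (X.2:ℕ) from by omega) (show (X.2:ℕ) ≤ (Z.2:ℕ) from by omega) (show (Z.2:ℕ) ≤ (P.2:ℕ) from by omega) t t' h
      · intro t t' h hcc
        fin_cases t <;> fin_cases t' <;>
          simp_all only [q5_0, q5_1, q5_2, q5_3, q5_4, p41_0, p41_1, p41_2, p41_3, p41_4,
            Fin.mk_lt_mk, Prod.ext_iff, Fin.ext_iff] <;>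
          first
            | omega
            | (constructor <;> intro hh <;> simp_all <;> omega)
    · cases hsz : M Z.1 Z.2 with
      | none => exact absurd hsz hU.2.1
      | some b =>
        cases b with
        | false => exact ⟨hU, rfl⟩
        | true =>
          exfalso
          have fYZc : (Y.1:ℕ) = Z.1 := congrArg Fin.val hU.2.2.1
          have fYZr : (Y.2:ℕ) < Z.2 := hU.2.2.2.1
          refine embed M hav (q5 Z Y Y Z X) ?_ ?_ ?_ ?_
          · intro t
            fin_cases t <;> simp only [q5_0, q5_1, q5_2, q5_3, q5_4]
            exacts [hU.2.1, hYX.1, hYX.1, hU.2.1, hYX.2.1]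
          · intro t t' h
            exact chainCol (fun t => (((q5 Z Y Y Z X) t).1 : ℕ)) (show (Z.1:ℕ) ≤ (Y.1:ℕ) from by omega) (show (Y.1:ℕ) ≤ (Y.1:ℕ) from by omega) (show (Y.1:ℕ) ≤ (Z.1:ℕ) from by omega) (show (Z.1:ℕ) ≤ (X.1:ℕ) from by omega) t t' h
          · intro t t' h
            exact chainRow (fun t => (((q5 Z Y Y Z X) t).2 : ℕ)) (show (Y.2:ℕ) ≤ (X.2:ℕ) from by omega) (show (X.2:ℕ) ≤ (Y.2:ℕ) from by omega) (show (Y.2:ℕ) ≤ (Z.2:ℕ) from by omega) (show (Z.2:ℕ) ≤ (Z.2:ℕ) from by omega) t t' h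
          · intro t t' h hcc
            fin_cases t <;> fin_cases t' <;>
              simp_all only [q5_0, q5_1, q5_2, q5_3, q5_4, p41_0, p41_1, p41_2, p41_3, p41_4,
                Fin.mk_lt_mk, Prod.ext_iff, Fin.ext_iff] <;>
              first
                | omega
                | (constructor <;> intro hh <;> simp_all <;> omega)
  · exfalso
    have fZYc : (Z.1:ℕ) = Y.1 := congrArg Fin.val hD.2.2.1
    have fZYr : (Z.2:ℕ) < Y.2 := hD.2.2.2.1
    refine embed M hav (q5 Y Z X P X) ?_ ?_ ?_ ?_
    · intro t
      fin_cases t <;> simp only [q5_0, q5_1, q5_2, q5_3, q5_4]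
      exacts [hYX.1, hD.1, hYX.2.1, hXP.2.1, hYX.2.1]
    · intro t t' h
      exact chainCol (fun t => (((q5 Y Z X P X) t).1 : ℕ)) (show (Y.1:ℕ) ≤ (Z.1:ℕ) from by omega) (show (Z.1:ℕ) ≤ (X.1:ℕ) from by omega) (show (X.1:ℕ) ≤ (P.1:ℕ) from by omega) (show (P.1:ℕ) ≤ (X.1:ℕ) from by omega) t t' h
    · intro t t' h
      exact chainRow (fun t => (((q5 Y Z X P X) t).2 : ℕ)) (show (Z.2:ℕ) ≤ (X.2:ℕ) from by omega) (show (X.2:ℕ) ≤ (X.2:ℕ) from by omega) (show (X.2:ℕ) ≤ (Y.2:ℕ) from by omega) (show (Y.2:ℕ) ≤ (P.2:ℕ) from by omega) t t' h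
    · intro t t' h hcc
      fin_cases t <;> fin_cases t' <;>
        simp_all only [q5_0, q5_1, q5_2, q5_3, q5_4, p41_0, p41_1, p41_2, p41_3, p41_4,
          Fin.mk_lt_mk, Prod.ext_iff, Fin.ext_iff] <;>
        first
          | omega
          | (constructor <;> intro hh <;> simp_all <;> omega)
  · exact absurd (right_unique hR hYX) hZX
  · exfalso
    have fZYc : (Z.1:ℕ) < Y.1 := hL.2.2.2.1
    have fZYr : (Z.2:ℕ) = Y.2 := congrArg Fin.val hL.2.2.1
    refine embed M hav (q5 Z Y X P X) ?_ ?_ ?_ ?_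
    · intro t
      fin_cases t <;> simp only [q5_0, q5_1, q5_2, q5_3, q5_4]
      exacts [hL.1, hYX.1, hYX.2.1, hXP.2.1, hYX.2.1]
    · intro t t' h
      exact chainCol (fun t => (((q5 Z Y X P X) t).1 : ℕ)) (show (Z.1:ℕ) ≤ (Y.1:ℕ) from by omega) (show (Y.1:ℕ) ≤ (X.1:ℕ) from by omega) (show (X.1:ℕ) ≤ (P.1:ℕ) from by omega) (show (P.1:ℕ) ≤ (X.1:ℕ) from by omega) t t' h
    · intro t t' h
      exact chainRow (fun t => (((q5 Z Y X P X) t).2 : ℕ)) (show (Y.2:ℕ) ≤ (X.2:ℕ) from by omega) (show (X.2:ℕ) ≤ (X.2:ℕ) from by omega) (show (X.2:ℕ) ≤ (Z.2:ℕ) from by omega) (show (Z.2:ℕ) ≤ (P.2:ℕ) from by omega) t t' h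
    · intro t t' h hcc
      fin_cases t <;> fin_cases t' <;>
        simp_all only [q5_0, q5_1, q5_2, q5_3, q5_4, p41_0, p41_1, p41_2, p41_3, p41_4,
          Fin.mk_lt_mk, Prod.ext_iff, Fin.ext_iff] <;>
        first
          | omega
          | (constructor <;> intro hh <;> simp_all <;> omega)

lemma step4' (M : GMatrix k ℓ)
    (hav : ∀ n : ℕ, ∀ π ∈ GridClass M n, ¬ Contains π perm41352)
    {X Y Z T : Fin k × Fin ℓ}
    (hYT : M Y.1 Y.2 = some true) (hZF : M Z.1 Z.2 = some false)
    (hYZ : UpM M Y Z) (hYX : RightM M Y X)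
    (hT : Adj' M Z T) (hTY : T ≠ Y) : RightM M Z T ∧ M T.1 T.2 = some true := by
  have fYZc : (Y.1:ℕ) = Z.1 := congrArg Fin.val hYZ.2.2.1
  have fYZr : (Y.2:ℕ) < Z.2 := hYZ.2.2.2.1
  have fYXc : (Y.1:ℕ) < X.1 := hYX.2.2.2.1
  have fYXr : (Y.2:ℕ) = X.2 := congrArg Fin.val hYX.2.2.1
  rcases hT with hU | hD | hR | hL
  · exfalso
    have fZTc : (Z.1:ℕ) = T.1 := congrArg Fin.val hU.2.2.1
    have fZTr : (Z.2:ℕ) < T.2 := hU.2.2.2.1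
    refine embed M hav (q5 Z Y Y T X) ?_ ?_ ?_ ?_
    · intro t
      fin_cases t <;> simp only [q5_0, q5_1, q5_2, q5_3, q5_4]
      exacts [hYZ.2.1, hYZ.1, hYZ.1, hU.2.1, hYX.2.1]
    · intro t t' h
      exact chainCol (fun t => (((q5 Z Y Y T X) t).1 : ℕ)) (show (Z.1:ℕ) ≤ (Y.1:ℕ) from by omega) (show (Y.1:ℕ) ≤ (Y.1:ℕ) from by omega) (show (Y.1:ℕ) ≤ (T.1:ℕ) from by omega) (show (T.1:ℕ) ≤ (X.1:ℕ) from by omega) t t' h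
    · intro t t' h
      exact chainRow (fun t => (((q5 Z Y Y T X) t).2 : ℕ)) (show (Y.2:ℕ) ≤ (X.2:ℕ) from by omega) (show (X.2:ℕ) ≤ (Y.2:ℕ) from by omega) (show (Y.2:ℕ) ≤ (Z.2:ℕ) from by omega) (show (Z.2:ℕ) ≤ (T.2:ℕ) from by omega) t t' h
    · intro t t' h hcc
      fin_cases t <;> fin_cases t' <;>
        simp_all only [q5_0, q5_1, q5_2, q5_3, q5_4, p41_0, p41_1, p41_2, p41_3, p41_4,
          Fin.mk_lt_mk, Prod.ext_iff, Fin.ext_iff] <;>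
        first
          | omega
          | (constructor <;> intro hh <;> simp_all <;> omega)
  · exact absurd (down_unique hD hYZ) hTY
  · cases hst : M T.1 T.2 with
    | none => exact absurd hst hR.2.1
    | some b =>
      cases b with
      | true => exact ⟨hR, rfl⟩
      | false =>
        exfalso
        have fZTc : (Z.1:ℕ) < T.1 := hR.2.2.2.1
        have fZTr : (Z.2:ℕ) = T.2 := congrArg Fin.val hR.2.2.1
        refine embed M hav (q5 Z Y Z T T) ?_ ?_ ?_ ?_
        · intro t
          fin_cases t <;> simp only [q5_0, q5_1, q5_2, q5_3, q5_4]
          exacts [hYZ.2.1, hYZ.1, hYZ.2.1, hR.2.1, hR.2.1]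
        · intro t t' h
          exact chainCol (fun t => (((q5 Z Y Z T T) t).1 : ℕ)) (show (Z.1:ℕ) ≤ (Y.1:ℕ) from by omega) (show (Y.1:ℕ) ≤ (Z.1:ℕ) from by omega) (show (Z.1:ℕ) ≤ (T.1:ℕ) from by omega) (show (T.1:ℕ) ≤ (T.1:ℕ) from by omega) t t' h
        · intro t t' h
          exact chainRow (fun t => (((q5 Z Y Z T T) t).2 : ℕ)) (show (Y.2:ℕ) ≤ (T.2:ℕ) from by omega) (show (T.2:ℕ) ≤ (Z.2:ℕ) from by omega) (show (Z.2:ℕ) ≤ (Z.2:ℕ) from by omega) (show (Z.2:ℕ) ≤ (T.2:ℕ) from by omega) t t' h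
        · intro t t' h hcc
          fin_cases t <;> fin_cases t' <;>
            simp_all only [q5_0, q5_1, q5_2, q5_3, q5_4, p41_0, p41_1, p41_2, p41_3, p41_4,
              Fin.mk_lt_mk, Prod.ext_iff, Fin.ext_iff] <;>
            first
              | omega
              | (constructor <;> intro hh <;> simp_all <;> omega)
  · exfalso
    have fTZc : (T.1:ℕ) < Z.1 := hL.2.2.2.1
    have fTZr : (T.2:ℕ) = Z.2 := congrArg Fin.val hL.2.2.1
    refine embed M hav (q5 T Y Y Z X) ?_ ?_ ?_ ?_
    · intro t
      fin_cases t <;> simp only [q5_0, q5_1, q5_2, q5_3, q5_4]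
      exacts [hL.1, hYZ.1, hYZ.1, hYZ.2.1, hYX.2.1]
    · intro t t' h
      exact chainCol (fun t => (((q5 T Y Y Z X) t).1 : ℕ)) (show (T.1:ℕ) ≤ (Y.1:ℕ) from by omega) (show (Y.1:ℕ) ≤ (Y.1:ℕ) from by omega) (show (Y.1:ℕ) ≤ (Z.1:ℕ) from by omega) (show (Z.1:ℕ) ≤ (X.1:ℕ) from by omega) t t' h
    · intro t t' h
      exact chainRow (fun t => (((q5 T Y Y Z X) t).2 : ℕ)) (show (Y.2:ℕ) ≤ (X.2:ℕ) from by omega) (show (X.2:ℕ) ≤ (Y.2:ℕ) from by omega) (show (Y.2:ℕ) ≤ (T.2:ℕ) from by omega) (show (T.2:ℕ) ≤ (Z.2:ℕ) from by omega) t t' h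
    · intro t t' h hcc
      fin_cases t <;> fin_cases t' <;>
        simp_all only [q5_0, q5_1, q5_2, q5_3, q5_4, p41_0, p41_1, p41_2, p41_3, p41_4,
          Fin.mk_lt_mk, Prod.ext_iff, Fin.ext_iff] <;>
        first
          | omega
          | (constructor <;> intro hh <;> simp_all <;> omega)

end Av41352
namespace Av41352
variable {k ℓ : ℕ}

def St1 (M : GMatrix k ℓ) (W P : Fin k × Fin ℓ) : Prop :=
  M P.1 P.2 = some true ∧ M W.1 W.2 = some false ∧ RightM M P W ∧ ∃ C, UpM M W C

def St2 (M : GMatrix k ℓ) (P X : Fin k × Fin ℓ) : Prop :=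
  M P.1 P.2 = some true ∧ M X.1 X.2 = some false ∧ UpM M P X ∧ ∃ W, RightM M P W

def St3 (M : GMatrix k ℓ) (X Y : Fin k × Fin ℓ) : Prop :=
  M X.1 X.2 = some false ∧ M Y.1 Y.2 = some true ∧ RightM M X Y ∧ ∃ P, UpM M P X

def St4 (M : GMatrix k ℓ) (Y Z : Fin k × Fin ℓ) : Prop :=
  M Y.1 Y.2 = some true ∧ M Z.1 Z.2 = some false ∧ UpM M Z Y ∧ ∃ X, RightM M X Y

def St1' (M : GMatrix k ℓ) (W P : Fin k × Fin ℓ) : Prop :=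
  M P.1 P.2 = some true ∧ M W.1 W.2 = some false ∧ RightM M W P ∧ ∃ C, UpM M C W

def St2' (M : GMatrix k ℓ) (P X : Fin k × Fin ℓ) : Prop :=
  M P.1 P.2 = some true ∧ M X.1 X.2 = some false ∧ UpM M X P ∧ ∃ W, RightM M W P

def St3' (M : GMatrix k ℓ) (X Y : Fin k × Fin ℓ) : Prop :=
  M X.1 X.2 = some false ∧ M Y.1 Y.2 = some true ∧ RightM M Y X ∧ ∃ P, UpM M X P

def St4' (M : GMatrix k ℓ) (Y Z : Fin k × Fin ℓ) : Prop :=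
  M Y.1 Y.2 = some true ∧ M Z.1 Z.2 = some false ∧ UpM M Y Z ∧ ∃ X, RightM M Y X

/-- The spiral invariant: `prev` is the previous cell, `cur` the current one. -/
def StS (M : GMatrix k ℓ) (prev cur : Fin k × Fin ℓ) : Prop :=
  St1 M prev cur ∨ St2 M prev cur ∨ St3 M prev cur ∨ St4 M prev cur ∨
  St1' M prev cur ∨ St2' M prev cur ∨ St3' M prev cur ∨ St4' M prev cur

lemma masterStep (M : GMatrix k ℓ)
    (hav : ∀ n : ℕ, ∀ π ∈ GridClass M n, ¬ Contains π perm41352)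
    {z y x : Fin k × Fin ℓ}
    (hS : StS M z y) (hA : Adj' M y x) (hne : x ≠ z) : StS M y x := by
  rcases hS with h | h | h | h | h | h | h | h
  · obtain ⟨hPT, hWF, hPW, C, hWC⟩ := h
    obtain ⟨hU, hXF⟩ := step1 M hav hPT hWF hPW hWC hA hne
    exact Or.inr (Or.inl ⟨hPT, hXF, hU, _, hPW⟩)
  · obtain ⟨hPT, hXF, hPX, W, hPW⟩ := h
    obtain ⟨hR, hYT⟩ := step2 M hav hPT hXF hPX hPW hA hne
    exact Or.inr (Or.inr (Or.inl ⟨hXF, hYT, hR, _, hPX⟩))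
  · obtain ⟨hXF, hYT, hXY, P, hPX⟩ := h
    obtain ⟨hU, hZF⟩ := step3 M hav hXF hYT hXY hPX hA hne
    exact Or.inr (Or.inr (Or.inr (Or.inl ⟨hYT, hZF, hU, _, hXY⟩)))
  · obtain ⟨hYT, hZF, hZY, X, hXY⟩ := h
    obtain ⟨hR, hTT⟩ := step4 M hav hYT hZF hZY hXY hA hne
    exact Or.inl ⟨hTT, hZF, hR, _, hZY⟩
  · obtain ⟨hPT, hWF, hWP, C, hCW⟩ := h
    obtain ⟨hU, hXF⟩ := step1' M hav hPT hWF hWP hCW hA hne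
    exact Or.inr (Or.inr (Or.inr (Or.inr (Or.inr (Or.inl ⟨hPT, hXF, hU, _, hWP⟩)))))
  · obtain ⟨hPT, hXF, hXP, W, hWP⟩ := h
    obtain ⟨hR, hYT⟩ := step2' M hav hPT hXF hXP hWP hA hne
    exact Or.inr (Or.inr (Or.inr (Or.inr (Or.inr (Or.inr (Or.inl ⟨hXF, hYT, hR, _, hXP⟩))))))
  · obtain ⟨hXF, hYT, hYX, P, hXP⟩ := h
    obtain ⟨hU, hZF⟩ := step3' M hav hXF hYT hYX hXP hA hne
    exact Or.inr (Or.inr (Or.inr (Or.inr (Or.inr (Or.inr (Or.inr ⟨hYT, hZF, hU, _, hYX⟩))))))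
  · obtain ⟨hYT, hZF, hYZ, X, hYX⟩ := h
    obtain ⟨hR, hTT⟩ := step4' M hav hYT hZF hYZ hYX hA hne
    exact Or.inr (Or.inr (Or.inr (Or.inr (Or.inl ⟨hTT, hZF, hR, _, hYZ⟩))))

lemma masterUnique (M : GMatrix k ℓ)
    (hav : ∀ n : ℕ, ∀ π ∈ GridClass M n, ¬ Contains π perm41352)
    {z y x1 x2 : Fin k × Fin ℓ}
    (hS : StS M z y) (a1 : Adj' M y x1) (a2 : Adj' M y x2)
    (h1 : x1 ≠ z) (h2 : x2 ≠ z) (h12 : x1 ≠ x2) : False := by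
  rcases hS with h | h | h | h | h | h | h | h
  · obtain ⟨hPT, hWF, hPW, C, hWC⟩ := h
    exact h12 (up_unique (step1 M hav hPT hWF hPW hWC a1 h1).1
      (step1 M hav hPT hWF hPW hWC a2 h2).1)
  · obtain ⟨hPT, hXF, hPX, W, hPW⟩ := h
    exact h12 (right_unique (step2 M hav hPT hXF hPX hPW a1 h1).1
      (step2 M hav hPT hXF hPX hPW a2 h2).1)
  · obtain ⟨hXF, hYT, hXY, P, hPX⟩ := h
    exact h12 (down_unique (step3 M hav hXF hYT hXY hPX a1 h1).1
      (step3 M hav hXF hYT hXY hPX a2 h2).1)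
  · obtain ⟨hYT, hZF, hZY, X, hXY⟩ := h
    exact h12 (left_unique (step4 M hav hYT hZF hZY hXY a1 h1).1
      (step4 M hav hYT hZF hZY hXY a2 h2).1)
  · obtain ⟨hPT, hWF, hWP, C, hCW⟩ := h
    exact h12 (down_unique (step1' M hav hPT hWF hWP hCW a1 h1).1
      (step1' M hav hPT hWF hWP hCW a2 h2).1)
  · obtain ⟨hPT, hXF, hXP, W, hWP⟩ := h
    exact h12 (left_unique (step2' M hav hPT hXF hXP hWP a1 h1).1
      (step2' M hav hPT hXF hXP hWP a2 h2).1)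
  · obtain ⟨hXF, hYT, hYX, P, hXP⟩ := h
    exact h12 (up_unique (step3' M hav hXF hYT hYX hXP a1 h1).1
      (step3' M hav hXF hYT hYX hXP a2 h2).1)
  · obtain ⟨hYT, hZF, hYZ, X, hYX⟩ := h
    exact h12 (right_unique (step4' M hav hYT hZF hYZ hYX a1 h1).1
      (step4' M hav hYT hZF hYZ hYX a2 h2).1)

lemma initLRU (M : GMatrix k ℓ)
    (hav : ∀ n : ℕ, ∀ π ∈ GridClass M n, ¬ Contains π perm41352)
    {A V B C : Fin k × Fin ℓ}
    (hA : RightM M A V) (hB : RightM M V B) (hC : UpM M V C)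
    (hRun : StS M V A → False) : False := by
  have fAVc : (A.1:ℕ) < V.1 := hA.2.2.2.1
  have fAVr : (A.2:ℕ) = V.2 := congrArg Fin.val hA.2.2.1
  have fVBc : (V.1:ℕ) < B.1 := hB.2.2.2.1
  have fVBr : (V.2:ℕ) = B.2 := congrArg Fin.val hB.2.2.1
  have fVCc : (V.1:ℕ) = C.1 := congrArg Fin.val hC.2.2.1
  have fVCr : (V.2:ℕ) < C.2 := hC.2.2.2.1
  cases hsV : M V.1 V.2 with
  | none => exact absurd hsV hA.2.1
  | some b =>
    cases b with
    | true =>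
      refine embed M hav (q5 A V V V B) ?_ ?_ ?_ ?_
      · intro t
        fin_cases t <;> simp only [q5_0, q5_1, q5_2, q5_3, q5_4]
        exacts [hA.1, hA.2.1, hA.2.1, hA.2.1, hB.2.1]
      · intro t t' h
        exact chainCol (fun t => (((q5 A V V V B) t).1 : ℕ)) (show (A.1:ℕ) ≤ (V.1:ℕ) from by omega) (show (V.1:ℕ) ≤ (V.1:ℕ) from by omega) (show (V.1:ℕ) ≤ (V.1:ℕ) from by omega) (show (V.1:ℕ) ≤ (B.1:ℕ) from by omega) t t' h
      · intro t t' h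
        exact chainRow (fun t => (((q5 A V V V B) t).2 : ℕ)) (show (V.2:ℕ) ≤ (B.2:ℕ) from by omega) (show (B.2:ℕ) ≤ (V.2:ℕ) from by omega) (show (V.2:ℕ) ≤ (A.2:ℕ) from by omega) (show (A.2:ℕ) ≤ (V.2:ℕ) from by omega) t t' h
      · intro t t' h hcc
        fin_cases t <;> fin_cases t' <;>
          simp_all only [q5_0, q5_1, q5_2, q5_3, q5_4, p41_0, p41_1, p41_2, p41_3, p41_4,
            Fin.mk_lt_mk, Prod.ext_iff, Fin.ext_iff] <;>
          first
            | omega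
            | (constructor <;> intro hh <;> simp_all <;> omega)
    | false =>
      cases hsA : M A.1 A.2 with
      | none => exact absurd hsA hA.1
      | some c =>
        cases c with
        | true => exact hRun (Or.inl ⟨hsA, hsV, hA, ⟨C, hC⟩⟩)
        | false =>
          refine embed M hav (q5 A A V C V) ?_ ?_ ?_ ?_
          · intro t
            fin_cases t <;> simp only [q5_0, q5_1, q5_2, q5_3, q5_4]
            exacts [hA.1, hA.1, hA.2.1, hC.2.1, hA.2.1]
          · intro t t' h
            exact chainCol (fun t => (((q5 A A V C V) t).1 : ℕ)) (show (A.1:ℕ) ≤ (A.1:ℕ) from by omega) (show (A.1:ℕ) ≤ (V.1:ℕ) from by omega) (show (V.1:ℕ) ≤ (C.1:ℕ) from by omega) (show (C.1:ℕ) ≤ (V.1:ℕ) from by omega) t t' h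
          · intro t t' h
            exact chainRow (fun t => (((q5 A A V C V) t).2 : ℕ)) (show (A.2:ℕ) ≤ (V.2:ℕ) from by omega) (show (V.2:ℕ) ≤ (V.2:ℕ) from by omega) (show (V.2:ℕ) ≤ (A.2:ℕ) from by omega) (show (A.2:ℕ) ≤ (C.2:ℕ) from by omega) t t' h
          · intro t t' h hcc
            fin_cases t <;> fin_cases t' <;>
              simp_all only [q5_0, q5_1, q5_2, q5_3, q5_4, p41_0, p41_1, p41_2, p41_3, p41_4,
                Fin.mk_lt_mk, Prod.ext_iff, Fin.ext_iff] <;>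
              first
                | omega
                | (constructor <;> intro hh <;> simp_all <;> omega)

lemma initLRD (M : GMatrix k ℓ)
    (hav : ∀ n : ℕ, ∀ π ∈ GridClass M n, ¬ Contains π perm41352)
    {A V B D : Fin k × Fin ℓ}
    (hA : RightM M A V) (hB : RightM M V B) (hD : UpM M D V)
    (hRun : StS M V B → False) : False := by
  have fAVc : (A.1:ℕ) < V.1 := hA.2.2.2.1
  have fAVr : (A.2:ℕ) = V.2 := congrArg Fin.val hA.2.2.1
  have fVBc : (V.1:ℕ) < B.1 := hB.2.2.2.1
  have fVBr : (V.2:ℕ) = B.2 := congrArg Fin.val hB.2.2.1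
  have fDVc : (D.1:ℕ) = V.1 := congrArg Fin.val hD.2.2.1
  have fDVr : (D.2:ℕ) < V.2 := hD.2.2.2.1
  cases hsV : M V.1 V.2 with
  | none => exact absurd hsV hA.2.1
  | some b =>
    cases b with
    | true =>
      refine embed M hav (q5 A V V V B) ?_ ?_ ?_ ?_
      · intro t
        fin_cases t <;> simp only [q5_0, q5_1, q5_2, q5_3, q5_4]
        exacts [hA.1, hA.2.1, hA.2.1, hA.2.1, hB.2.1]
      · intro t t' h
        exact chainCol (fun t => (((q5 A V V V B) t).1 : ℕ)) (show (A.1:ℕ) ≤ (V.1:ℕ) from by omega) (show (V.1:ℕ) ≤ (V.1:ℕ) from by omega) (show (V.1:ℕ) ≤ (V.1:ℕ) from by omega) (show (V.1:ℕ) ≤ (B.1:ℕ) from by omega) t t' h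
      · intro t t' h
        exact chainRow (fun t => (((q5 A V V V B) t).2 : ℕ)) (show (V.2:ℕ) ≤ (B.2:ℕ) from by omega) (show (B.2:ℕ) ≤ (V.2:ℕ) from by omega) (show (V.2:ℕ) ≤ (A.2:ℕ) from by omega) (show (A.2:ℕ) ≤ (V.2:ℕ) from by omega) t t' h
      · intro t t' h hcc
        fin_cases t <;> fin_cases t' <;>
          simp_all only [q5_0, q5_1, q5_2, q5_3, q5_4, p41_0, p41_1, p41_2, p41_3, p41_4,
            Fin.mk_lt_mk, Prod.ext_iff, Fin.ext_iff] <;>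
          first
            | omega
            | (constructor <;> intro hh <;> simp_all <;> omega)
    | false =>
      cases hsB : M B.1 B.2 with
      | none => exact absurd hsB hB.2.1
      | some c =>
        cases c with
        | true => exact hRun (Or.inr (Or.inr (Or.inr (Or.inr (Or.inl ⟨hsB, hsV, hB, ⟨D, hD⟩⟩)))))
        | false =>
          refine embed M hav (q5 V D V B B) ?_ ?_ ?_ ?_
          · intro t
            fin_cases t <;> simp only [q5_0, q5_1, q5_2, q5_3, q5_4]
            exacts [hB.1, hD.1, hB.1, hB.2.1, hB.2.1]
          · intro t t' h
            exact chainCol (fun t => (((q5 V D V B B) t).1 : ℕ)) (show (V.1:ℕ) ≤ (D.1:ℕ) from by omega) (show (D.1:ℕ) ≤ (V.1:ℕ) from by omega) (show (V.1:ℕ) ≤ (B.1:ℕ) from by omega) (show (B.1:ℕ) ≤ (B.1:ℕ) from by omega) t t' h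
          · intro t t' h
            exact chainRow (fun t => (((q5 V D V B B) t).2 : ℕ)) (show (D.2:ℕ) ≤ (B.2:ℕ) from by omega) (show (B.2:ℕ) ≤ (V.2:ℕ) from by omega) (show (V.2:ℕ) ≤ (V.2:ℕ) from by omega) (show (V.2:ℕ) ≤ (B.2:ℕ) from by omega) t t' h
          · intro t t' h hcc
            fin_cases t <;> fin_cases t' <;>
              simp_all only [q5_0, q5_1, q5_2, q5_3, q5_4, p41_0, p41_1, p41_2, p41_3, p41_4,
                Fin.mk_lt_mk, Prod.ext_iff, Fin.ext_iff] <;>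
              first
                | omega
                | (constructor <;> intro hh <;> simp_all <;> omega)

lemma initUDL (M : GMatrix k ℓ)
    (hav : ∀ n : ℕ, ∀ π ∈ GridClass M n, ¬ Contains π perm41352)
    {A V C D : Fin k × Fin ℓ}
    (hC : UpM M V C) (hD : UpM M D V) (hA : RightM M A V)
    (hRun : StS M V D → False) : False := by
  have fVCc : (V.1:ℕ) = C.1 := congrArg Fin.val hC.2.2.1
  have fVCr : (V.2:ℕ) < C.2 := hC.2.2.2.1
  have fDVc : (D.1:ℕ) = V.1 := congrArg Fin.val hD.2.2.1
  have fDVr : (D.2:ℕ) < V.2 := hD.2.2.2.1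
  have fAVc : (A.1:ℕ) < V.1 := hA.2.2.2.1
  have fAVr : (A.2:ℕ) = V.2 := congrArg Fin.val hA.2.2.1
  cases hsV : M V.1 V.2 with
  | none => exact absurd hsV hA.2.1
  | some b =>
    cases b with
    | false =>
      refine embed M hav (q5 A D V C V) ?_ ?_ ?_ ?_
      · intro t
        fin_cases t <;> simp only [q5_0, q5_1, q5_2, q5_3, q5_4]
        exacts [hA.1, hD.1, hA.2.1, hC.2.1, hA.2.1]
      · intro t t' h
        exact chainCol (fun t => (((q5 A D V C V) t).1 : ℕ)) (show (A.1:ℕ) ≤ (D.1:ℕ) from by omega) (show (D.1:ℕ) ≤ (V.1:ℕ) from by omega) (show (V.1:ℕ) ≤ (C.1:ℕ) from by omega) (show (C.1:ℕ) ≤ (V.1:ℕ) from by omega) t t' h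
      · intro t t' h
        exact chainRow (fun t => (((q5 A D V C V) t).2 : ℕ)) (show (D.2:ℕ) ≤ (V.2:ℕ) from by omega) (show (V.2:ℕ) ≤ (V.2:ℕ) from by omega) (show (V.2:ℕ) ≤ (A.2:ℕ) from by omega) (show (A.2:ℕ) ≤ (C.2:ℕ) from by omega) t t' h
      · intro t t' h hcc
        fin_cases t <;> fin_cases t' <;>
          simp_all only [q5_0, q5_1, q5_2, q5_3, q5_4, p41_0, p41_1, p41_2, p41_3, p41_4,
            Fin.mk_lt_mk, Prod.ext_iff, Fin.ext_iff] <;>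
          first
            | omega
            | (constructor <;> intro hh <;> simp_all <;> omega)
    | true =>
      cases hsD : M D.1 D.2 with
      | none => exact absurd hsD hD.1
      | some c =>
        cases c with
        | true =>
          refine embed M hav (q5 A D V C D) ?_ ?_ ?_ ?_
          · intro t
            fin_cases t <;> simp only [q5_0, q5_1, q5_2, q5_3, q5_4]
            exacts [hA.1, hD.1, hA.2.1, hC.2.1, hD.1]
          · intro t t' h
            exact chainCol (fun t => (((q5 A D V C D) t).1 : ℕ)) (show (A.1:ℕ) ≤ (D.1:ℕ) from by omega) (show (D.1:ℕ) ≤ (V.1:ℕ) from by omega) (show (V.1:ℕ) ≤ (C.1:ℕ) from by omega) (show (C.1:ℕ) ≤ (D.1:ℕ) from by omega) t t' h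
          · intro t t' h
            exact chainRow (fun t => (((q5 A D V C D) t).2 : ℕ)) (show (D.2:ℕ) ≤ (D.2:ℕ) from by omega) (show (D.2:ℕ) ≤ (V.2:ℕ) from by omega) (show (V.2:ℕ) ≤ (A.2:ℕ) from by omega) (show (A.2:ℕ) ≤ (C.2:ℕ) from by omega) t t' h
          · intro t t' h hcc
            fin_cases t <;> fin_cases t' <;>
              simp_all only [q5_0, q5_1, q5_2, q5_3, q5_4, p41_0, p41_1, p41_2, p41_3, p41_4,
                Fin.mk_lt_mk, Prod.ext_iff, Fin.ext_iff] <;>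
              first
                | omega
                | (constructor <;> intro hh <;> simp_all <;> omega)
        | false => exact hRun (Or.inr (Or.inr (Or.inr (Or.inl ⟨hsV, hsD, hD, ⟨A, hA⟩⟩))))

lemma initUDR (M : GMatrix k ℓ)
    (hav : ∀ n : ℕ, ∀ π ∈ GridClass M n, ¬ Contains π perm41352)
    {B V C D : Fin k × Fin ℓ}
    (hC : UpM M V C) (hD : UpM M D V) (hB : RightM M V B)
    (hRun : StS M V C → False) : False := by
  have fVCc : (V.1:ℕ) = C.1 := congrArg Fin.val hC.2.2.1
  have fVCr : (V.2:ℕ) < C.2 := hC.2.2.2.1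
  have fDVc : (D.1:ℕ) = V.1 := congrArg Fin.val hD.2.2.1
  have fDVr : (D.2:ℕ) < V.2 := hD.2.2.2.1
  have fVBc : (V.1:ℕ) < B.1 := hB.2.2.2.1
  have fVBr : (V.2:ℕ) = B.2 := congrArg Fin.val hB.2.2.1
  cases hsV : M V.1 V.2 with
  | none => exact absurd hsV hB.1
  | some b =>
    cases b with
    | false =>
      refine embed M hav (q5 V D V C B) ?_ ?_ ?_ ?_
      · intro t
        fin_cases t <;> simp only [q5_0, q5_1, q5_2, q5_3, q5_4]
        exacts [hB.1, hD.1, hB.1, hC.2.1, hB.2.1]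
      · intro t t' h
        exact chainCol (fun t => (((q5 V D V C B) t).1 : ℕ)) (show (V.1:ℕ) ≤ (D.1:ℕ) from by omega) (show (D.1:ℕ) ≤ (V.1:ℕ) from by omega) (show (V.1:ℕ) ≤ (C.1:ℕ) from by omega) (show (C.1:ℕ) ≤ (B.1:ℕ) from by omega) t t' h
      · intro t t' h
        exact chainRow (fun t => (((q5 V D V C B) t).2 : ℕ)) (show (D.2:ℕ) ≤ (B.2:ℕ) from by omega) (show (B.2:ℕ) ≤ (V.2:ℕ) from by omega) (show (V.2:ℕ) ≤ (V.2:ℕ) from by omega) (show (V.2:ℕ) ≤ (C.2:ℕ) from by omega) t t' h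
      · intro t t' h hcc
        fin_cases t <;> fin_cases t' <;>
          simp_all only [q5_0, q5_1, q5_2, q5_3, q5_4, p41_0, p41_1, p41_2, p41_3, p41_4,
            Fin.mk_lt_mk, Prod.ext_iff, Fin.ext_iff] <;>
          first
            | omega
            | (constructor <;> intro hh <;> simp_all <;> omega)
    | true =>
      cases hsC : M C.1 C.2 with
      | none => exact absurd hsC hC.2.1
      | some c =>
        cases c with
        | true =>
          refine embed M hav (q5 C D V C B) ?_ ?_ ?_ ?_
          · intro t
            fin_cases t <;> simp only [q5_0, q5_1, q5_2, q5_3, q5_4]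
            exacts [hC.2.1, hD.1, hB.1, hC.2.1, hB.2.1]
          · intro t t' h
            exact chainCol (fun t => (((q5 C D V C B) t).1 : ℕ)) (show (C.1:ℕ) ≤ (D.1:ℕ) from by omega) (show (D.1:ℕ) ≤ (V.1:ℕ) from by omega) (show (V.1:ℕ) ≤ (C.1:ℕ) from by omega) (show (C.1:ℕ) ≤ (B.1:ℕ) from by omega) t t' h
          · intro t t' h
            exact chainRow (fun t => (((q5 C D V C B) t).2 : ℕ)) (show (D.2:ℕ) ≤ (B.2:ℕ) from by omega) (show (B.2:ℕ) ≤ (V.2:ℕ) from by omega) (show (V.2:ℕ) ≤ (C.2:ℕ) from by omega) (show (C.2:ℕ) ≤ (C.2:ℕ) from by omega) t t' h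
          · intro t t' h hcc
            fin_cases t <;> fin_cases t' <;>
              simp_all only [q5_0, q5_1, q5_2, q5_3, q5_4, p41_0, p41_1, p41_2, p41_3, p41_4,
                Fin.mk_lt_mk, Prod.ext_iff, Fin.ext_iff] <;>
              first
                | omega
                | (constructor <;> intro hh <;> simp_all <;> omega)
        | false => exact hRun (Or.inr (Or.inr (Or.inr (Or.inr (Or.inr (Or.inr (Or.inr ⟨hsV, hsC, hC, ⟨B, hB⟩⟩)))))))

end Av41352
namespace Av41352

open SimpleGraph

lemma walk_decomp {VH : Type} {H : SimpleGraph VH} {x y : VH} (w : H.Walk x y) (hxy : x ≠ y) :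
    ∃ (z : VH) (h : H.Adj x z) (w' : H.Walk z y), w = Walk.cons h w' := by
  cases w with
  | nil => exact absurd rfl hxy
  | cons h w' => exact ⟨_, h, w', rfl⟩

lemma other_two {VG : Type} {s : Set VG} (h3 : s.ncard = 3) {v : VG} (hv : v ∈ s) :
    ∃ w1 w2, w1 ∈ s ∧ w2 ∈ s ∧ w1 ≠ w2 ∧ w1 ≠ v ∧ w2 ≠ v := by
  obtain ⟨a, b, c, hab, hac, hbc, rfl⟩ := Set.ncard_eq_three.mp h3
  simp only [Set.mem_insert_iff, Set.mem_singleton_iff] at hv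
  rcases hv with rfl | rfl | rfl
  · exact ⟨b, c, by simp, by simp, hbc, Ne.symm hab, Ne.symm hac⟩
  · exact ⟨a, c, by simp, by simp, hac, hab, Ne.symm hbc⟩
  · exact ⟨a, b, by simp, by simp, hab, hac, hbc⟩

lemma snd_facts {VH : Type} {H : SimpleGraph VH} {x y z : VH} (h : H.Adj x z)
    (q : H.Walk z y) (hp : (Walk.cons h q).IsPath) :
    z ∈ (Walk.cons h q).support ∧ z ≠ x := by
  constructor
  · rw [Walk.support_cons]
    exact List.mem_cons_of_mem _ q.start_mem_support
  · obtain ⟨-, hnin⟩ := (Walk.cons_isPath_iff _ _).mp hp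
    exact fun he => hnin (he ▸ q.start_mem_support)

lemma snd_disj {VG VH : Type} {G : SimpleGraph VG} {H : SimpleGraph VH}
    {fs : VG → VH} (hinj : Function.Injective fs)
    {p : ∀ a b : VG, G.Adj a b → H.Walk (fs a) (fs b)}
    (hinternal : ∀ a b h, ∀ x ∈ (p a b h).support, x ≠ fs a → x ≠ fs b → ∀ c : VG, fs c ≠ x)
    (hdisj : ∀ a b h a' b' h', s(a, b) ≠ s(a', b') → ∀ x : VH,
      x ∈ (p a b h).support → x ∈ (p a' b' h').support → x = fs a ∨ x = fs b)
    {a b a' b' : VG} (hab : G.Adj a b) (hab' : G.Adj a' b')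
    (hss : s(a, b) ≠ s(a', b')) (hba' : b ≠ a') (hbb' : b ≠ b') :
    ∀ z, z ∈ (p a b hab).support → z ≠ fs a → z ∉ (p a' b' hab').support := by
  intro z hz hza hz'
  rcases hdisj a b hab a' b' hab' hss z hz hz' with h | h
  · exact hza h
  · exact hinternal a' b' hab' (fs b) (h ▸ hz') (fun he => hba' (hinj he))
      (fun he => hbb' (hinj he)) b rfl

/-- Run the spiral along a walk: starting in a good state, reach the end vertex which
has two more neighbours, producing a contradiction. -/
lemma runSpiral {VH : Type} {H : SimpleGraph VH} {k ℓ : ℕ} (M : GMatrix k ℓ)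
    (hav : ∀ n : ℕ, ∀ π ∈ GridClass M n, ¬ Contains π perm41352)
    (fgr : VH → Fin k × Fin ℓ) (hinj : Function.Injective fgr)
    (hadj' : ∀ a b : VH, H.Adj a b → Adj' M (fgr a) (fgr b))
    (S : Set VH) (e : VH) :
    ∀ (y : VH) (W : H.Walk y e),
      (∀ z' ∈ S, ∃ z1 z2, H.Adj e z1 ∧ H.Adj e z2 ∧ z1 ≠ z2 ∧ z1 ≠ z' ∧ z2 ≠ z') →
      ∀ (z : VH), W.IsPath → z ∉ W.support → z ∈ S →
      (∀ a ∈ W.support, a ∈ S) → StS M (fgr z) (fgr y) → False := by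
  intro y W
  induction W with
  | nil =>
    intro hEnd z _ _ hzS _ hG
    obtain ⟨z1, z2, ha1, ha2, h12, h1z, h2z⟩ := hEnd z hzS
    exact masterUnique M hav hG (hadj' _ _ ha1) (hadj' _ _ ha2)
      (fun he => h1z (hinj he)) (fun he => h2z (hinj he)) (fun he => h12 (hinj he))
  | cons h W' ih =>
    intro hEnd z hp hzs hzS hsubS hG
    obtain ⟨hp', hnin⟩ := (Walk.cons_isPath_iff _ _).mp hp
    have hvmem : W'.support ⊆ (Walk.cons h W').support := by
      rw [Walk.support_cons]
      exact fun a ha => List.mem_cons_of_mem _ ha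
    apply ih hEnd
    · exact hp'
    · exact hnin
    · exact hsubS _ (Walk.start_mem_support _)
    · exact fun a ha => hsubS a (hvmem ha)
    · refine masterStep M hav hG (hadj' _ _ h) (fun he => hzs ?_)
      exact (hinj he) ▸ hvmem (Walk.start_mem_support W')

end Av41352
/-- If `G` has a vertex of degree 3 whose three neighbors all have degree 3, then no
subdivision of `G` is representable in `Av(41352)`. -/
theorem av41352_no_subdivision_representable {VG : Type} (G : SimpleGraph VG) (v : VG)
    (hv : (G.neighborSet v).ncard = 3)
    (hnb : ∀ u ∈ G.neighborSet v, (G.neighborSet u).ncard = 3) :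
    ∀ (VH : Type) (H : SimpleGraph VH), IsSubdivision G H →
      ¬ ∃ (k ℓ : ℕ) (M : GMatrix k ℓ) (f : VH → Fin k × Fin ℓ),
          Function.Injective f ∧
          (∀ x : Fin k × Fin ℓ, M x.1 x.2 ≠ none ↔ ∃ a, f a = x) ∧
          (∀ a b : VH, H.Adj a b ↔ (cellGraph M).Adj (f a) (f b)) ∧
          (∀ n : ℕ, ∀ π ∈ GridClass M n, ¬ Contains π perm41352) := by
  intro VH H hsub
  rintro ⟨k, ℓ, M, fgr, hinj, himg, hadjIff, hav⟩
  obtain ⟨fs, hfsinj, p, hpath, hinternal, hdisj, hcovV, hcovE⟩ := hsub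
  have hadj' : ∀ a b : VH, H.Adj a b → Av41352.Adj' M (fgr a) (fgr b) :=
    fun a b h => (Av41352.cellGraph_adj_iff M _ _).mp ((hadjIff a b).mp h)
  obtain ⟨u1, u2, u3, h12, h13, h23, hNset⟩ := Set.ncard_eq_three.mp hv
  have hm1 : u1 ∈ G.neighborSet v := by rw [hNset]; simp
  have hm2 : u2 ∈ G.neighborSet v := by rw [hNset]; simp
  have hm3 : u3 ∈ G.neighborSet v := by rw [hNset]; simp
  have hu1 : G.Adj v u1 := hm1
  have hu2 : G.Adj v u2 := hm2
  have hu3 : G.Adj v u3 := hm3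
  -- arm 1
  have hnefs1 : fs v ≠ fs u1 := fun he => (hu1.ne) (hfsinj he)
  obtain ⟨z1, e1, q1, hq1⟩ := Av41352.walk_decomp (p v u1 hu1) hnefs1
  have hpc1 : (SimpleGraph.Walk.cons e1 q1).IsPath := by
    rw [← hq1]; exact hpath v u1 hu1
  have hpi1 : q1.IsPath ∧ fs v ∉ q1.support :=
    (SimpleGraph.Walk.cons_isPath_iff _ _).mp hpc1
  have hsf1 : z1 ∈ (SimpleGraph.Walk.cons e1 q1).support ∧ z1 ≠ fs v :=
    Av41352.snd_facts e1 q1 hpc1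
  have hmem1 : z1 ∈ (p v u1 hu1).support := by rw [hq1]; exact hsf1.1
  have hEnd1 : ∀ z' ∈ {x | x ∈ (p v u1 hu1).support}, ∃ t1 t2,
      H.Adj (fs u1) t1 ∧ H.Adj (fs u1) t2 ∧ t1 ≠ t2 ∧ t1 ≠ z' ∧ t2 ≠ z' := by
    intro z' hz'
    have hvm : v ∈ G.neighborSet u1 := hu1.symm
    obtain ⟨w1, w2, hw1m, hw2m, hw12, hw1v, hw2v⟩ := Av41352.other_two (hnb u1 hm1) hvm
    have ha1 : G.Adj u1 w1 := hw1m
    have ha2 : G.Adj u1 w2 := hw2m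
    obtain ⟨t1, f1, r1, hr1⟩ := Av41352.walk_decomp (p u1 w1 ha1)
      (fun he => (ha1.ne) (hfsinj he))
    obtain ⟨t2, f2, r2, hr2⟩ := Av41352.walk_decomp (p u1 w2 ha2)
      (fun he => (ha2.ne) (hfsinj he))
    have hpc1 : (SimpleGraph.Walk.cons f1 r1).IsPath := by
      rw [← hr1]; exact hpath u1 w1 ha1
    have hpc2 : (SimpleGraph.Walk.cons f2 r2).IsPath := by
      rw [← hr2]; exact hpath u1 w2 ha2
    have hsf1 := Av41352.snd_facts f1 r1 hpc1
    have hsf2 := Av41352.snd_facts f2 r2 hpc2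
    have hmm1 : t1 ∈ (p u1 w1 ha1).support := by rw [hr1]; exact hsf1.1
    have hmm2 : t2 ∈ (p u1 w2 ha2).support := by rw [hr2]; exact hsf2.1
    have hss12 : s(u1, w1) ≠ s(u1, w2) := by
      intro hee
      rcases Sym2.eq_iff.mp hee with ⟨-, he⟩ | ⟨he, -⟩
      · exact hw12 he
      · exact (ha2.ne) he
    have hssv1 : s(u1, w1) ≠ s(v, u1) := by
      intro hee
      rcases Sym2.eq_iff.mp hee with ⟨he, -⟩ | ⟨-, he⟩
      · exact (hu1.ne) he.symm
      · exact hw1v he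
    have hssv2 : s(u1, w2) ≠ s(v, u1) := by
      intro hee
      rcases Sym2.eq_iff.mp hee with ⟨he, -⟩ | ⟨-, he⟩
      · exact (hu1.ne) he.symm
      · exact hw2v he
    refine ⟨t1, t2, f1, f2, ?_, ?_, ?_⟩
    · intro heq
      refine Av41352.snd_disj hfsinj hinternal hdisj ha1 ha2 hss12 (ha1.ne') hw12
        t1 hmm1 hsf1.2 ?_
      rw [heq]; exact hmm2
    · intro heq
      refine Av41352.snd_disj hfsinj hinternal hdisj ha1 hu1 hssv1 hw1v (ha1.ne')
        t1 hmm1 hsf1.2 ?_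
      rw [heq]; exact hz'
    · intro heq
      refine Av41352.snd_disj hfsinj hinternal hdisj ha2 hu1 hssv2 hw2v (ha2.ne')
        t2 hmm2 hsf2.2 ?_
      rw [heq]; exact hz'
  have hRun1 : Av41352.StS M (fgr (fs v)) (fgr z1) → False := fun hG =>
    Av41352.runSpiral M hav fgr hinj hadj' {x | x ∈ (p v u1 hu1).support} (fs u1)
      z1 q1 hEnd1 (fs v) hpi1.1 hpi1.2 ((p v u1 hu1).start_mem_support)
      (fun a ha => show a ∈ (p v u1 hu1).support by
        rw [hq1]; exact List.mem_cons_of_mem _ ha) hG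
  have gA1 : Av41352.Adj' M (fgr (fs v)) (fgr z1) := hadj' _ _ e1
  -- arm 2
  have hnefs2 : fs v ≠ fs u2 := fun he => (hu2.ne) (hfsinj he)
  obtain ⟨z2, e2, q2, hq2⟩ := Av41352.walk_decomp (p v u2 hu2) hnefs2
  have hpc2 : (SimpleGraph.Walk.cons e2 q2).IsPath := by
    rw [← hq2]; exact hpath v u2 hu2
  have hpi2 : q2.IsPath ∧ fs v ∉ q2.support :=
    (SimpleGraph.Walk.cons_isPath_iff _ _).mp hpc2
  have hsf2 : z2 ∈ (SimpleGraph.Walk.cons e2 q2).support ∧ z2 ≠ fs v :=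
    Av41352.snd_facts e2 q2 hpc2
  have hmem2 : z2 ∈ (p v u2 hu2).support := by rw [hq2]; exact hsf2.1
  have hEnd2 : ∀ z' ∈ {x | x ∈ (p v u2 hu2).support}, ∃ t1 t2,
      H.Adj (fs u2) t1 ∧ H.Adj (fs u2) t2 ∧ t1 ≠ t2 ∧ t1 ≠ z' ∧ t2 ≠ z' := by
    intro z' hz'
    have hvm : v ∈ G.neighborSet u2 := hu2.symm
    obtain ⟨w1, w2, hw1m, hw2m, hw12, hw1v, hw2v⟩ := Av41352.other_two (hnb u2 hm2) hvm
    have ha1 : G.Adj u2 w1 := hw1m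
    have ha2 : G.Adj u2 w2 := hw2m
    obtain ⟨t1, f1, r1, hr1⟩ := Av41352.walk_decomp (p u2 w1 ha1)
      (fun he => (ha1.ne) (hfsinj he))
    obtain ⟨t2, f2, r2, hr2⟩ := Av41352.walk_decomp (p u2 w2 ha2)
      (fun he => (ha2.ne) (hfsinj he))
    have hpc1 : (SimpleGraph.Walk.cons f1 r1).IsPath := by
      rw [← hr1]; exact hpath u2 w1 ha1
    have hpc2 : (SimpleGraph.Walk.cons f2 r2).IsPath := by
      rw [← hr2]; exact hpath u2 w2 ha2
    have hsf1 := Av41352.snd_facts f1 r1 hpc1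
    have hsf2 := Av41352.snd_facts f2 r2 hpc2
    have hmm1 : t1 ∈ (p u2 w1 ha1).support := by rw [hr1]; exact hsf1.1
    have hmm2 : t2 ∈ (p u2 w2 ha2).support := by rw [hr2]; exact hsf2.1
    have hss12 : s(u2, w1) ≠ s(u2, w2) := by
      intro hee
      rcases Sym2.eq_iff.mp hee with ⟨-, he⟩ | ⟨he, -⟩
      · exact hw12 he
      · exact (ha2.ne) he
    have hssv1 : s(u2, w1) ≠ s(v, u2) := by
      intro hee
      rcases Sym2.eq_iff.mp hee with ⟨he, -⟩ | ⟨-, he⟩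
      · exact (hu2.ne) he.symm
      · exact hw1v he
    have hssv2 : s(u2, w2) ≠ s(v, u2) := by
      intro hee
      rcases Sym2.eq_iff.mp hee with ⟨he, -⟩ | ⟨-, he⟩
      · exact (hu2.ne) he.symm
      · exact hw2v he
    refine ⟨t1, t2, f1, f2, ?_, ?_, ?_⟩
    · intro heq
      refine Av41352.snd_disj hfsinj hinternal hdisj ha1 ha2 hss12 (ha1.ne') hw12
        t1 hmm1 hsf1.2 ?_
      rw [heq]; exact hmm2
    · intro heq
      refine Av41352.snd_disj hfsinj hinternal hdisj ha1 hu2 hssv1 hw1v (ha1.ne')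
        t1 hmm1 hsf1.2 ?_
      rw [heq]; exact hz'
    · intro heq
      refine Av41352.snd_disj hfsinj hinternal hdisj ha2 hu2 hssv2 hw2v (ha2.ne')
        t2 hmm2 hsf2.2 ?_
      rw [heq]; exact hz'
  have hRun2 : Av41352.StS M (fgr (fs v)) (fgr z2) → False := fun hG =>
    Av41352.runSpiral M hav fgr hinj hadj' {x | x ∈ (p v u2 hu2).support} (fs u2)
      z2 q2 hEnd2 (fs v) hpi2.1 hpi2.2 ((p v u2 hu2).start_mem_support)
      (fun a ha => show a ∈ (p v u2 hu2).support by
        rw [hq2]; exact List.mem_cons_of_mem _ ha) hG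
  have gA2 : Av41352.Adj' M (fgr (fs v)) (fgr z2) := hadj' _ _ e2
  -- arm 3
  have hnefs3 : fs v ≠ fs u3 := fun he => (hu3.ne) (hfsinj he)
  obtain ⟨z3, e3, q3, hq3⟩ := Av41352.walk_decomp (p v u3 hu3) hnefs3
  have hpc3 : (SimpleGraph.Walk.cons e3 q3).IsPath := by
    rw [← hq3]; exact hpath v u3 hu3
  have hpi3 : q3.IsPath ∧ fs v ∉ q3.support :=
    (SimpleGraph.Walk.cons_isPath_iff _ _).mp hpc3
  have hsf3 : z3 ∈ (SimpleGraph.Walk.cons e3 q3).support ∧ z3 ≠ fs v :=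
    Av41352.snd_facts e3 q3 hpc3
  have hmem3 : z3 ∈ (p v u3 hu3).support := by rw [hq3]; exact hsf3.1
  have hEnd3 : ∀ z' ∈ {x | x ∈ (p v u3 hu3).support}, ∃ t1 t2,
      H.Adj (fs u3) t1 ∧ H.Adj (fs u3) t2 ∧ t1 ≠ t2 ∧ t1 ≠ z' ∧ t2 ≠ z' := by
    intro z' hz'
    have hvm : v ∈ G.neighborSet u3 := hu3.symm
    obtain ⟨w1, w2, hw1m, hw2m, hw12, hw1v, hw2v⟩ := Av41352.other_two (hnb u3 hm3) hvm
    have ha1 : G.Adj u3 w1 := hw1m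
    have ha2 : G.Adj u3 w2 := hw2m
    obtain ⟨t1, f1, r1, hr1⟩ := Av41352.walk_decomp (p u3 w1 ha1)
      (fun he => (ha1.ne) (hfsinj he))
    obtain ⟨t2, f2, r2, hr2⟩ := Av41352.walk_decomp (p u3 w2 ha2)
      (fun he => (ha2.ne) (hfsinj he))
    have hpc1 : (SimpleGraph.Walk.cons f1 r1).IsPath := by
      rw [← hr1]; exact hpath u3 w1 ha1
    have hpc2 : (SimpleGraph.Walk.cons f2 r2).IsPath := by
      rw [← hr2]; exact hpath u3 w2 ha2
    have hsf1 := Av41352.snd_facts f1 r1 hpc1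
    have hsf2 := Av41352.snd_facts f2 r2 hpc2
    have hmm1 : t1 ∈ (p u3 w1 ha1).support := by rw [hr1]; exact hsf1.1
    have hmm2 : t2 ∈ (p u3 w2 ha2).support := by rw [hr2]; exact hsf2.1
    have hss12 : s(u3, w1) ≠ s(u3, w2) := by
      intro hee
      rcases Sym2.eq_iff.mp hee with ⟨-, he⟩ | ⟨he, -⟩
      · exact hw12 he
      · exact (ha2.ne) he
    have hssv1 : s(u3, w1) ≠ s(v, u3) := by
      intro hee
      rcases Sym2.eq_iff.mp hee with ⟨he, -⟩ | ⟨-, he⟩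
      · exact (hu3.ne) he.symm
      · exact hw1v he
    have hssv2 : s(u3, w2) ≠ s(v, u3) := by
      intro hee
      rcases Sym2.eq_iff.mp hee with ⟨he, -⟩ | ⟨-, he⟩
      · exact (hu3.ne) he.symm
      · exact hw2v he
    refine ⟨t1, t2, f1, f2, ?_, ?_, ?_⟩
    · intro heq
      refine Av41352.snd_disj hfsinj hinternal hdisj ha1 ha2 hss12 (ha1.ne') hw12
        t1 hmm1 hsf1.2 ?_
      rw [heq]; exact hmm2
    · intro heq
      refine Av41352.snd_disj hfsinj hinternal hdisj ha1 hu3 hssv1 hw1v (ha1.ne')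
        t1 hmm1 hsf1.2 ?_
      rw [heq]; exact hz'
    · intro heq
      refine Av41352.snd_disj hfsinj hinternal hdisj ha2 hu3 hssv2 hw2v (ha2.ne')
        t2 hmm2 hsf2.2 ?_
      rw [heq]; exact hz'
  have hRun3 : Av41352.StS M (fgr (fs v)) (fgr z3) → False := fun hG =>
    Av41352.runSpiral M hav fgr hinj hadj' {x | x ∈ (p v u3 hu3).support} (fs u3)
      z3 q3 hEnd3 (fs v) hpi3.1 hpi3.2 ((p v u3 hu3).start_mem_support)
      (fun a ha => show a ∈ (p v u3 hu3).support by
        rw [hq3]; exact List.mem_cons_of_mem _ ha) hG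
  have gA3 : Av41352.Adj' M (fgr (fs v)) (fgr z3) := hadj' _ _ e3
  have hssA12 : s(v, u1) ≠ s(v, u2) := by
    intro hee
    rcases Sym2.eq_iff.mp hee with ⟨-, he⟩ | ⟨he, -⟩
    · exact h12 he
    · exact (hu2.ne) he
  have d12 : fgr z1 ≠ fgr z2 := by
    intro he
    refine Av41352.snd_disj hfsinj hinternal hdisj hu1 hu2 hssA12 (hu1.ne') h12
      z1 hmem1 hsf1.2 ?_
    rw [hinj he]; exact hmem2
  have hssA13 : s(v, u1) ≠ s(v, u3) := by
    intro hee
    rcases Sym2.eq_iff.mp hee with ⟨-, he⟩ | ⟨he, -⟩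
    · exact h13 he
    · exact (hu3.ne) he
  have d13 : fgr z1 ≠ fgr z3 := by
    intro he
    refine Av41352.snd_disj hfsinj hinternal hdisj hu1 hu3 hssA13 (hu1.ne') h13
      z1 hmem1 hsf1.2 ?_
    rw [hinj he]; exact hmem3
  have hssA23 : s(v, u2) ≠ s(v, u3) := by
    intro hee
    rcases Sym2.eq_iff.mp hee with ⟨-, he⟩ | ⟨he, -⟩
    · exact h23 he
    · exact (hu3.ne) he
  have d23 : fgr z2 ≠ fgr z3 := by
    intro he
    refine Av41352.snd_disj hfsinj hinternal hdisj hu2 hu3 hssA23 (hu2.ne') h23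
      z2 hmem2 hsf2.2 ?_
    rw [hinj he]; exact hmem3
  rcases gA1 with g1 | g1 | g1 | g1 <;> rcases gA2 with g2 | g2 | g2 | g2 <;>
    rcases gA3 with g3 | g3 | g3 | g3 <;>
    first
    | exact d12 (Av41352.up_unique g1 g2)
    | exact d12 (Av41352.down_unique g1 g2)
    | exact d12 (Av41352.right_unique g1 g2)
    | exact d12 (Av41352.left_unique g1 g2)
    | exact d13 (Av41352.up_unique g1 g3)
    | exact d13 (Av41352.down_unique g1 g3)
    | exact d13 (Av41352.right_unique g1 g3)
    | exact d13 (Av41352.left_unique g1 g3)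
    | exact d23 (Av41352.up_unique g2 g3)
    | exact d23 (Av41352.down_unique g2 g3)
    | exact d23 (Av41352.right_unique g2 g3)
    | exact d23 (Av41352.left_unique g2 g3)
    | exact Av41352.initUDR M hav g1 g2 g3 hRun1
    | exact Av41352.initUDL M hav g1 g2 g3 hRun2
    | exact Av41352.initUDR M hav g1 g3 g2 hRun1
    | exact Av41352.initLRU M hav g3 g2 g1 hRun3
    | exact Av41352.initUDL M hav g1 g3 g2 hRun3
    | exact Av41352.initLRU M hav g2 g3 g1 hRun2
    | exact Av41352.initUDR M hav g2 g1 g3 hRun2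
    | exact Av41352.initUDL M hav g2 g1 g3 hRun1
    | exact Av41352.initUDR M hav g3 g1 g2 hRun3
    | exact Av41352.initLRD M hav g3 g2 g1 hRun2
    | exact Av41352.initUDL M hav g3 g1 g2 hRun1
    | exact Av41352.initLRD M hav g2 g3 g1 hRun3
    | exact Av41352.initUDR M hav g2 g3 g1 hRun2
    | exact Av41352.initLRU M hav g3 g1 g2 hRun3
    | exact Av41352.initUDR M hav g3 g2 g1 hRun3
    | exact Av41352.initLRD M hav g3 g1 g2 hRun1
    | exact Av41352.initLRU M hav g2 g1 g3 hRun2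
    | exact Av41352.initLRD M hav g2 g1 g3 hRun1
    | exact Av41352.initUDL M hav g2 g3 g1 hRun3
    | exact Av41352.initLRU M hav g1 g3 g2 hRun1
    | exact Av41352.initUDL M hav g3 g2 g1 hRun2
    | exact Av41352.initLRD M hav g1 g3 g2 hRun3
    | exact Av41352.initLRU M hav g1 g2 g3 hRun1
    | exact Av41352.initLRD M hav g1 g2 g3 hRun2
end

section
/- If the cell graph of a monotone gridding matrix M is a tree, then Geom(M) = Grid(M); in particular, for acyclic M, every M-gridded permutation π admits a point set on the standard figure Λ_M, in general position, isomorphic to the diagram of π and respecting the given gridding. -/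
/-- The standard figure `Λ_M` of a monotone gridding matrix `M`: an open increasing
diagonal segment in the unit cell of each Inc entry, an open decreasing one for each
Dec entry. -/
def stdFigure {k ℓ : ℕ} (M : GMatrix k ℓ) : Set (ℝ × ℝ) :=
  {p | ∃ (i : Fin k) (j : Fin ℓ) (t : ℝ), 0 < t ∧ t < 1 ∧
    ((M i j = some true ∧ p = ((i.val : ℝ) + t, (j.val : ℝ) + t)) ∨
     (M i j = some false ∧ p = ((i.val : ℝ) + t, (j.val : ℝ) + 1 - t)))}

/-- The geometric grid class of `M` at length `n`: permutations isomorphic to a finite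
subset of the standard figure in general position. -/
def GeomClass {k ℓ : ℕ} (M : GMatrix k ℓ) (n : ℕ) : Set (Equiv.Perm (Fin n)) :=
  {π | ∃ g : Fin n → ℝ × ℝ, (∀ p, g p ∈ stdFigure M) ∧
    (∀ p q : Fin n, p < q → (g p).1 < (g q).1) ∧
    (∀ p q : Fin n, π p < π q → (g p).2 < (g q).2)}



open Finset in
lemma interleave {n : ℕ} (u : Fin n → ℝ) (key : Fin n → ℕ) (A B : Finset (Fin n))
    (hAB : Disjoint A B)
    (hA01 : ∀ q ∈ A, 0 < u q ∧ u q < 1)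
    (hAmono : ∀ q1 ∈ A, ∀ q2 ∈ A, key q1 < key q2 → u q1 < u q2) :
    ∃ v : Fin n → ℝ, (∀ q, q ∉ B → v q = u q) ∧ (∀ p ∈ B, 0 < v p ∧ v p < 1) ∧
      (∀ x ∈ A ∪ B, ∀ y ∈ A ∪ B, key x < key y → v x < v y) := by
  classical
  set aS : Fin n → Finset ℝ := fun p => insert (0:ℝ) ((A.filter fun q => key q < key p).image u) with haS
  set bS : Fin n → Finset ℝ := fun p => insert (1:ℝ) ((A.filter fun q => key p < key q).image u) with hbS
  have haSne : ∀ p, (aS p).Nonempty := fun p => insert_nonempty _ _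
  have hbSne : ∀ p, (bS p).Nonempty := fun p => insert_nonempty _ _
  set a : Fin n → ℝ := fun p => (aS p).max' (haSne p) with ha
  set b : Fin n → ℝ := fun p => (bS p).min' (hbSne p) with hb
  set f : Fin n → ℝ := fun p => ((key p : ℝ) + 1) / ((key p : ℝ) + 2) with hf
  have hf01 : ∀ p, 0 < f p ∧ f p < 1 := by
    intro p
    constructor
    · positivity
    · rw [hf, div_lt_one (by positivity)]; linarith
  have hfmono : ∀ p q, key p < key q → f p < f q := by
    intro p q h
    rw [hf, div_lt_div_iff₀ (by positivity) (by positivity)]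
    have : (key p : ℝ) < key q := by exact_mod_cast h
    nlinarith
  have hab : ∀ p, a p < b p := by
    intro p
    rw [ha, hb]
    rw [Finset.max'_lt_iff]
    intro x hx
    rw [Finset.lt_min'_iff]
    intro y hy
    simp only [haS, mem_insert, mem_image, mem_filter] at hx
    simp only [hbS, mem_insert, mem_image, mem_filter] at hy
    rcases hx with rfl | ⟨q1, ⟨hq1A, _⟩, rfl⟩ <;> rcases hy with rfl | ⟨q2, ⟨hq2A, _⟩, rfl⟩
    · norm_num
    · exact (hA01 q2 hq2A).1
    · exact (hA01 q1 hq1A).2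
    · exact hAmono q1 hq1A q2 hq2A (by omega)
  have ha0 : ∀ p, 0 ≤ a p := fun p => Finset.le_max' _ _ (mem_insert_self _ _)
  have hb1 : ∀ p, b p ≤ 1 := fun p => Finset.min'_le _ _ (mem_insert_self _ _)
  have hamono : ∀ p q, key p ≤ key q → a p ≤ a q := by
    intro p q h
    apply Finset.max'_subset
    apply insert_subset_insert
    apply image_subset_image
    intro x hx; rw [mem_filter] at hx ⊢; exact ⟨hx.1, by omega⟩
  have hbmono : ∀ p q, key p ≤ key q → b p ≤ b q := by
    intro p q h
    apply Finset.min'_subset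
    apply insert_subset_insert
    apply image_subset_image
    intro x hx; rw [mem_filter] at hx ⊢; exact ⟨hx.1, by omega⟩
  have hua : ∀ q ∈ A, ∀ p, key q < key p → u q ≤ a p := by
    intro q hq p h
    apply Finset.le_max'
    simp only [haS, mem_insert, mem_image, mem_filter]
    exact Or.inr ⟨q, ⟨hq, h⟩, rfl⟩
  have hbu : ∀ q ∈ A, ∀ p, key p < key q → b p ≤ u q := by
    intro q hq p h
    apply Finset.min'_le
    simp only [hbS, mem_insert, mem_image, mem_filter]
    exact Or.inr ⟨q, ⟨hq, h⟩, rfl⟩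
  refine ⟨fun p => if p ∈ B then a p + (b p - a p) * f p else u p, ?_, ?_, ?_⟩
  · intro q hq; simp [hq]
  · intro p hp
    simp only [hp, if_true]
    have h1 := hab p
    have h2 := (hf01 p).1
    have h3 := (hf01 p).2
    have h4 := ha0 p
    have h5 := hb1 p
    constructor <;> nlinarith
  · intro x hx y hy hkey
    have hvlt : ∀ p ∈ B, a p + (b p - a p) * f p < b p := by
      intro p _
      have := hab p; have := (hf01 p).2; have := (hf01 p).1; nlinarith
    have hvgt : ∀ p ∈ B, a p < a p + (b p - a p) * f p := by
      intro p _
      have := hab p; have := (hf01 p).1; nlinarith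
    rcases mem_union.mp hx with hxA | hxB <;> rcases mem_union.mp hy with hyA | hyB
    · have hx' : x ∉ B := fun h => (hAB.forall_ne_finset hxA h) rfl
      have hy' : y ∉ B := fun h => (hAB.forall_ne_finset hyA h) rfl
      simp only [hx', hy', if_false]
      exact hAmono x hxA y hyA hkey
    · have hx' : x ∉ B := fun h => (hAB.forall_ne_finset hxA h) rfl
      simp only [hx', hyB, if_false, if_true]
      calc u x ≤ a y := hua x hxA y hkey
        _ < _ := hvgt y hyB
    · have hy' : y ∉ B := fun h => (hAB.forall_ne_finset hyA h) rfl
      simp only [hy', hxB, if_false, if_true]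
      calc a x + (b x - a x) * f x < b x := hvlt x hxB
        _ ≤ u y := hbu y hyA x hkey
    · simp only [hxB, hyB, if_true]
      have h1 : a x ≤ a y := hamono x y hkey.le
      have h2 : b x ≤ b y := hbmono x y hkey.le
      have h3 : f x < f y := hfmono x y hkey
      have h4 := hab y
      have h5 := (hf01 x).1
      have h6 := (hf01 x).2
      have h7 := (hf01 y).2
      nlinarith [mul_le_mul_of_nonneg_right (sub_le_sub h2 h1) h5.le]


open SimpleGraph

section TreeLemmas

variable {V : Type*} [DecidableEq V] {G : SimpleGraph V} {ρ : V}

/-- On a shortest walk from `ρ`, every support vertex is at distance ≤ length. -/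
lemma dist_le_of_mem_support {u w : V} (p : G.Walk ρ u) (hw : w ∈ p.support) :
    G.dist ρ w ≤ p.length :=
  le_trans (SimpleGraph.dist_le (p.takeUntil w hw)) (SimpleGraph.Walk.length_takeUntil_le p hw)

/-- Two different neighbors of `x`, both at distance `dist ρ x - 1`, are impossible
in an acyclic graph. -/
lemma no_two_parents (hacyc : G.IsAcyclic) {x a b : V}
    (hra : G.Reachable ρ a) (hrb : G.Reachable ρ b)
    (hax : G.Adj a x) (hbx : G.Adj b x) (hab : a ≠ b)
    (hda : G.dist ρ a + 1 = G.dist ρ x) (hdb : G.dist ρ b + 1 = G.dist ρ x) : False := by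
  obtain ⟨pa, hpa⟩ := hra.exists_walk_length_eq_dist
  obtain ⟨pb, hpb⟩ := hrb.exists_walk_length_eq_dist
  have hpaP : pa.IsPath := pa.isPath_of_length_eq_dist hpa
  have hpbP : pb.IsPath := pb.isPath_of_length_eq_dist hpb
  have hxa : x ∉ pa.support := by
    intro hmem
    have := dist_le_of_mem_support pa hmem
    omega
  have hxb : x ∉ pb.support := by
    intro hmem
    have := dist_le_of_mem_support pb hmem
    omega
  have hxa' : x ∉ pa.reverse.support := by rwa [SimpleGraph.Walk.support_reverse, List.mem_reverse]
  have hxb' : x ∉ pb.reverse.support := by rwa [SimpleGraph.Walk.support_reverse, List.mem_reverse]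
  have hQa : (SimpleGraph.Walk.cons hax.symm pa.reverse).IsPath :=
    hpaP.reverse.cons hxa'
  have hQb : (SimpleGraph.Walk.cons hbx.symm pb.reverse).IsPath :=
    hpbP.reverse.cons hxb'
  have := hacyc.path_unique ⟨_, hQa⟩ ⟨_, hQb⟩
  have heq : (SimpleGraph.Walk.cons hax.symm pa.reverse) = (SimpleGraph.Walk.cons hbx.symm pb.reverse) := by
    simpa using congrArg Subtype.val this
  have : a = b := by
    have h1 := congrArg (fun w => SimpleGraph.Walk.getVert w 1) heq
    simpa [SimpleGraph.Walk.getVert_cons_succ] using h1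
  exact hab this

/-- Adjacent vertices have distances (from a fixed root) differing by exactly one. -/
lemma adj_dist_cases (hacyc : G.IsAcyclic) {u v : V}
    (hru : G.Reachable ρ u) (hrv : G.Reachable ρ v) (h : G.Adj u v) :
    G.dist ρ v = G.dist ρ u + 1 ∨ G.dist ρ u = G.dist ρ v + 1 := by
  obtain ⟨pu, hpu⟩ := hru.exists_walk_length_eq_dist
  obtain ⟨pv, hpv⟩ := hrv.exists_walk_length_eq_dist
  have h1 : G.dist ρ v ≤ G.dist ρ u + 1 := by
    have := SimpleGraph.dist_le (pu.concat h)
    rwa [SimpleGraph.Walk.length_concat, hpu] at this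
  have h2 : G.dist ρ u ≤ G.dist ρ v + 1 := by
    have := SimpleGraph.dist_le (pv.concat h.symm)
    rwa [SimpleGraph.Walk.length_concat, hpv] at this
  have hne : G.dist ρ u ≠ G.dist ρ v := by
    intro heqd
    have hpuP : pu.IsPath := pu.isPath_of_length_eq_dist hpu
    have hpvP : pv.IsPath := pv.isPath_of_length_eq_dist hpv
    -- show v ∉ pu.support
    have hvu : v ∉ pu.support := by
      intro hmem
      have h3 : G.dist ρ v ≤ (pu.takeUntil v hmem).length := SimpleGraph.dist_le _
      have h4 := SimpleGraph.Walk.length_takeUntil_le pu hmem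
      have h5 : (pu.takeUntil v hmem).length = pu.length := by omega
      have h6 : ((pu.takeUntil v hmem).append (pu.dropUntil v hmem)) = pu :=
        SimpleGraph.Walk.take_spec _ hmem
      have h7 : (pu.takeUntil v hmem).length + (pu.dropUntil v hmem).length = pu.length := by
        rw [← SimpleGraph.Walk.length_append, h6]
      have h8 : (pu.dropUntil v hmem).length = 0 := by omega
      have := SimpleGraph.Walk.eq_of_length_eq_zero h8
      exact h.ne' this
    have hvu' : v ∉ pu.reverse.support := by
      rwa [SimpleGraph.Walk.support_reverse, List.mem_reverse]
    have hQ : (SimpleGraph.Walk.cons h.symm pu.reverse).IsPath := hpuP.reverse.cons hvu'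
    have := hacyc.path_unique ⟨_, hQ⟩ ⟨pv.reverse, hpvP.reverse⟩
    have heq : (SimpleGraph.Walk.cons h.symm pu.reverse) = pv.reverse := by
      simpa using congrArg Subtype.val this
    have hlen := congrArg SimpleGraph.Walk.length heq
    simp only [SimpleGraph.Walk.length_cons, SimpleGraph.Walk.length_reverse] at hlen
    omega
  omega

/-- Walking along a path whose first step goes away from the root keeps going away. -/
lemma ascend (hacyc : G.IsAcyclic) {b y : V} (w : G.Walk b y) (hw : w.IsPath) :
    ∀ x : V, G.Adj x b → x ∉ w.support → G.Reachable ρ x →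
    G.dist ρ b = G.dist ρ x + 1 → G.dist ρ x < G.dist ρ y := by
  induction w with
  | nil =>
    intro x hxb hxs hrx hd
    omega
  | @cons b c y h w' ih =>
    intro x hxb hxs hrx hd
    have hrb : G.Reachable ρ b := hrx.trans hxb.reachable
    have hrc : G.Reachable ρ c := hrb.trans h.reachable
    have hw' : w'.IsPath := hw.of_cons
    have hxc : x ≠ c := by
      intro heq
      apply hxs
      rw [SimpleGraph.Walk.support_cons]
      right
      rw [heq]
      exact SimpleGraph.Walk.start_mem_support w'
    have hbc : G.dist ρ c = G.dist ρ b + 1 := by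
      rcases adj_dist_cases hacyc hrb hrc h with h1 | h1
      · exact h1
      · exfalso
        exact no_two_parents hacyc hrx hrc hxb h.symm hxc (by omega) (by omega)
    have hbw' : b ∉ w'.support := by
      have := hw.2
      simp only [SimpleGraph.Walk.support_cons] at this
      exact (List.nodup_cons.mp this).1
    have := ih hw' b h hbw' hrb hbc
    omega
  done

end TreeLemmas

section Peel

variable {k ℓ : ℕ} {M : GMatrix k ℓ}


lemma adj_row {a b : Fin k} {j : Fin ℓ} (hab : a < b) (ha : M a j ≠ none) (hb : M b j ≠ none)
    (hmid : ∀ i, a < i → i < b → M i j = none) : (cellGraph M).Adj (a, j) (b, j) := by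
  rw [cellGraph, SimpleGraph.fromRel_adj]
  refine ⟨by simp [Prod.ext_iff, hab.ne], Or.inl ⟨ha, hb, Or.inr ⟨rfl, hab, hmid⟩⟩⟩

lemma adj_col {i : Fin k} {a b : Fin ℓ} (hab : a < b) (ha : M i a ≠ none) (hb : M i b ≠ none)
    (hmid : ∀ j, a < j → j < b → M i j = none) : (cellGraph M).Adj (i, a) (i, b) := by
  rw [cellGraph, SimpleGraph.fromRel_adj]
  refine ⟨by simp [Prod.ext_iff, hab.ne], Or.inl ⟨ha, hb, Or.inl ⟨rfl, hab, hmid⟩⟩⟩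

lemma row_walk (j : Fin ℓ) : ∀ (d : ℕ) (a b : Fin k), b.val - a.val ≤ d → a < b →
    M a j ≠ none → M b j ≠ none →
    ∃ w : (cellGraph M).Walk (a, j) (b, j), ∀ v ∈ w.support, v.2 = j ∧ M v.1 v.2 ≠ none := by
  intro d
  induction d with
  | zero => intro a b h1 h2; omega
  | succ d ih =>
    intro a b h1 h2 ha hb
    by_cases hex : ∃ i : Fin k, a < i ∧ i < b ∧ M i j ≠ none
    · obtain ⟨i, hai, hib, hi⟩ := hex
      obtain ⟨w1, hw1⟩ := ih a i (by omega) hai ha hi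
      obtain ⟨w2, hw2⟩ := ih i b (by omega) hib hi hb
      refine ⟨w1.append w2, ?_⟩
      intro v hv
      rcases (SimpleGraph.Walk.mem_support_append_iff _ _).mp hv with h | h
      · exact hw1 v h
      · exact hw2 v h
    · push_neg at hex
      refine ⟨(adj_row h2 ha hb (fun i h1 h2 => hex i h1 h2)).toWalk, ?_⟩
      intro v hv
      simp only [SimpleGraph.Walk.support_cons, SimpleGraph.Walk.support_nil,
        List.mem_cons, List.mem_singleton] at hv
      rcases hv with rfl | rfl | h
      · exact ⟨rfl, ha⟩
      · exact ⟨rfl, hb⟩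
      · simp at h

lemma col_walk (i : Fin k) : ∀ (d : ℕ) (a b : Fin ℓ), b.val - a.val ≤ d → a < b →
    M i a ≠ none → M i b ≠ none →
    ∃ w : (cellGraph M).Walk (i, a) (i, b), ∀ v ∈ w.support, v.1 = i ∧ M v.1 v.2 ≠ none := by
  intro d
  induction d with
  | zero => intro a b h1 h2; omega
  | succ d ih =>
    intro a b h1 h2 ha hb
    by_cases hex : ∃ j : Fin ℓ, a < j ∧ j < b ∧ M i j ≠ none
    · obtain ⟨j, haj, hjb, hj⟩ := hex
      obtain ⟨w1, hw1⟩ := ih a j (by omega) haj ha hj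
      obtain ⟨w2, hw2⟩ := ih j b (by omega) hjb hj hb
      refine ⟨w1.append w2, ?_⟩
      intro v hv
      rcases (SimpleGraph.Walk.mem_support_append_iff _ _).mp hv with h | h
      · exact hw1 v h
      · exact hw2 v h
    · push_neg at hex
      refine ⟨(adj_col h2 ha hb (fun j h1 h2 => hex j h1 h2)).toWalk, ?_⟩
      intro v hv
      simp only [SimpleGraph.Walk.support_cons, SimpleGraph.Walk.support_nil,
        List.mem_cons, List.mem_singleton] at hv
      rcases hv with rfl | rfl | h
      · exact ⟨rfl, ha⟩
      · exact ⟨rfl, hb⟩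
      · simp at h

lemma row_reach {x y : Fin k × Fin ℓ} (hx : M x.1 x.2 ≠ none) (hy : M y.1 y.2 ≠ none)
    (hrow : y.2 = x.2) (hne : y ≠ x) :
    ∃ w : (cellGraph M).Walk x y, ∀ v ∈ w.support, v.2 = x.2 ∧ M v.1 v.2 ≠ none := by
  obtain ⟨i1, j⟩ := x
  obtain ⟨i2, j2⟩ := y
  simp only at hrow
  subst hrow
  have hne' : i2 ≠ i1 := by
    intro h; exact hne (by simp [h])
  rcases lt_or_gt_of_ne hne' with h | h
  · obtain ⟨w, hw⟩ := row_walk j2 (i1.val - i2.val) i2 i1 le_rfl h hy hx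
    refine ⟨w.reverse, ?_⟩
    intro v hv
    rw [SimpleGraph.Walk.support_reverse, List.mem_reverse] at hv
    exact hw v hv
  · obtain ⟨w, hw⟩ := row_walk j2 (i2.val - i1.val) i1 i2 le_rfl h hx hy
    exact ⟨w, hw⟩

lemma col_reach {x y : Fin k × Fin ℓ} (hx : M x.1 x.2 ≠ none) (hy : M y.1 y.2 ≠ none)
    (hcol : y.1 = x.1) (hne : y ≠ x) :
    ∃ w : (cellGraph M).Walk x y, ∀ v ∈ w.support, v.1 = x.1 ∧ M v.1 v.2 ≠ none := by
  obtain ⟨i, j1⟩ := x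
  obtain ⟨i2, j2⟩ := y
  simp only at hcol
  subst hcol
  have hne' : j2 ≠ j1 := by
    intro h; exact hne (by simp [h])
  rcases lt_or_gt_of_ne hne' with h | h
  · obtain ⟨w, hw⟩ := col_walk i2 (j1.val - j2.val) j2 j1 le_rfl h hy hx
    refine ⟨w.reverse, ?_⟩
    intro v hv
    rw [SimpleGraph.Walk.support_reverse, List.mem_reverse] at hv
    exact hw v hv
  · obtain ⟨w, hw⟩ := col_walk i2 (j2.val - j1.val) j1 j2 le_rfl h hx hy
    exact ⟨w, hw⟩

lemma reach_all
    (hconn : ((cellGraph M).induce {x : Fin k × Fin ℓ | M x.1 x.2 ≠ none}).Connected)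
    {x y : Fin k × Fin ℓ} (hx : M x.1 x.2 ≠ none) (hy : M y.1 y.2 ≠ none) :
    (cellGraph M).Reachable x y := by
  have h := hconn ⟨x, hx⟩ ⟨y, hy⟩
  exact h.map ⟨Subtype.val, fun {a b} hab => hab⟩

lemma peel_exists (hacyc : (cellGraph M).IsAcyclic)
    (hconn : ((cellGraph M).induce {x : Fin k × Fin ℓ | M x.1 x.2 ≠ none}).Connected)
    (C : Finset (Fin k × Fin ℓ)) (hCne : C.Nonempty) (hC : ∀ x ∈ C, M x.1 x.2 ≠ none) :
    ∃ x ∈ C, (∀ d ∈ C, d.2 = x.2 → d = x) ∨ (∀ d ∈ C, d.1 = x.1 → d = x) := by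
  classical
  by_contra hcon
  push_neg at hcon
  obtain ⟨ρ, hρC⟩ := hCne
  have hρ : M ρ.1 ρ.2 ≠ none := hC ρ hρC
  set G := cellGraph M with hG
  set μ : Fin k × Fin ℓ → ℕ := fun v => G.dist ρ v with hμ
  obtain ⟨x, hxC, hxmax⟩ := C.exists_max_image μ ⟨ρ, hρC⟩
  obtain ⟨⟨y, hyC, hy2, hyne⟩, ⟨z, hzC, hz1, hzne⟩⟩ := hcon x hxC
  have hxM : M x.1 x.2 ≠ none := hC x hxC
  have hyM : M y.1 y.2 ≠ none := hC y hyC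
  have hzM : M z.1 z.2 ≠ none := hC z hzC
  have hrx : G.Reachable ρ x := reach_all hconn hρ hxM
  -- walks
  obtain ⟨wr, hwr⟩ := row_reach (M := M) hxM hyM hy2 hyne
  obtain ⟨wc, hwc⟩ := col_reach (M := M) hxM hzM hz1 hzne
  -- take paths
  have hxy : x ≠ y := fun h => hyne h.symm
  have hxz : x ≠ z := fun h => hzne h.symm
  set pr : G.Walk x y := wr.toPath.val with hpr
  set pc : G.Walk x z := wc.toPath.val with hpc
  have hprP : pr.IsPath := wr.toPath.prop
  have hpcP : pc.IsPath := wc.toPath.prop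
  have hprS : ∀ v ∈ pr.support, v.2 = x.2 ∧ M v.1 v.2 ≠ none :=
    fun v hv => hwr v (wr.support_toPath_subset hv)
  have hpcS : ∀ v ∈ pc.support, v.1 = x.1 ∧ M v.1 v.2 ≠ none :=
    fun v hv => hwc v (wc.support_toPath_subset hv)
  -- decompose pr
  rcases hqr : pr with _ | @⟨_, a, _, har, qr⟩
  · exact hxy (by rfl)
  rcases hqc : pc with _ | @⟨_, b, _, hbc, qc⟩
  · exact hxz (by rfl)
  -- second vertices
  have haS : a ∈ pr.support := by
    rw [hqr, SimpleGraph.Walk.support_cons]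
    exact List.mem_cons_of_mem _ (SimpleGraph.Walk.start_mem_support qr)
  have hbS : b ∈ pc.support := by
    rw [hqc, SimpleGraph.Walk.support_cons]
    exact List.mem_cons_of_mem _ (SimpleGraph.Walk.start_mem_support qc)
  obtain ⟨ha2, haM⟩ := hprS a haS
  obtain ⟨hb1, hbM⟩ := hpcS b hbS
  have hab : a ≠ b := by
    intro h
    apply har.ne'
    have : a = (x.1, x.2) := Prod.ext (h ▸ hb1) ha2
    simpa using this
  have hra : G.Reachable ρ a := reach_all hconn hρ haM
  have hrb : G.Reachable ρ b := reach_all hconn hρ hbM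
  have hqrP : qr.IsPath ∧ x ∉ qr.support := by
    have := hprP
    rw [hqr, SimpleGraph.Walk.cons_isPath_iff] at this
    exact this
  have hqcP : qc.IsPath ∧ x ∉ qc.support := by
    have := hpcP
    rw [hqc, SimpleGraph.Walk.cons_isPath_iff] at this
    exact this
  rcases adj_dist_cases hacyc hrx hra har with h1 | h1
  · have := ascend hacyc qr hqrP.1 x har hqrP.2 hrx h1
    have := hxmax y hyC
    simp only [hμ] at this
    omega
  rcases adj_dist_cases hacyc hrx hrb hbc with h2 | h2
  · have := ascend hacyc qc hqcP.1 x hbc hqcP.2 hrx h2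
    have := hxmax z hzC
    simp only [hμ] at this
    omega
  exact no_two_parents hacyc hra hrb har.symm hbc.symm hab (by omega) (by omega)


lemma exists_t {n : ℕ} (hacyc : (cellGraph M).IsAcyclic)
    (hconn : ((cellGraph M).induce {x : Fin k × Fin ℓ | M x.1 x.2 ≠ none}).Connected)
    (π : Equiv.Perm (Fin n)) (colf : Fin n → Fin k) (rowf : Fin n → Fin ℓ)
    (hInc : ∀ p q : Fin n, colf p = colf q → rowf p = rowf q →
      M (colf p) (rowf p) = some true → p < q → π p < π q)
    (hDec : ∀ p q : Fin n, colf p = colf q → rowf p = rowf q →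
      M (colf p) (rowf p) = some false → p < q → π q < π p) :
    ∀ C : Finset (Fin k × Fin ℓ), (∀ x ∈ C, M x.1 x.2 ≠ none) → ∃ t : Fin n → ℝ,
      (∀ p, (colf p, rowf p) ∈ C → 0 < t p ∧ t p < 1) ∧
      (∀ p q, (colf p, rowf p) ∈ C → (colf q, rowf q) ∈ C → colf p = colf q → p < q →
        t p < t q) ∧
      (∀ p q, (colf p, rowf p) ∈ C → (colf q, rowf q) ∈ C → rowf p = rowf q → π p < π q →
        (if M (colf p) (rowf p) = some true then t p else 1 - t p) <
        (if M (colf q) (rowf q) = some true then t q else 1 - t q)) := by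
  classical
  intro C
  induction C using Finset.strongInduction with
  | _ C ih =>
  intro hC
  rcases C.eq_empty_or_nonempty with rfl | hCne
  · exact ⟨fun _ => 1/2, fun p hp => absurd hp (Finset.notMem_empty _),
      fun p q hp => absurd hp (Finset.notMem_empty _),
      fun p q hp => absurd hp (Finset.notMem_empty _)⟩
  obtain ⟨x, hxC, halone⟩ := peel_exists hacyc hconn C hCne hC
  set C' := C.erase x with hC'
  have hC'sub : C' ⊂ C := Finset.erase_ssubset hxC
  obtain ⟨t', ht'01, ht'col, ht'row⟩ := ih C' hC'sub (fun y hy => hC y (Finset.mem_of_mem_erase hy))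
  have hMx : M x.1 x.2 ≠ none := hC x hxC
  obtain ⟨bx, hbx⟩ : ∃ b, M x.1 x.2 = some b := Option.ne_none_iff_exists'.mp hMx
  -- helper facts about cells equal to x
  have hcellx : ∀ p : Fin n, (colf p, rowf p) = x → colf p = x.1 ∧ rowf p = x.2 := by
    intro p hp
    constructor
    · rw [← hp]
    · rw [← hp]
  have hMeqx : ∀ p : Fin n, (colf p, rowf p) = x → M (colf p) (rowf p) = some bx := by
    intro p hp
    rw [(hcellx p hp).1, (hcellx p hp).2, hbx]
  -- in-cell order equivalences for points in cell x
  have hcellord : ∀ p q : Fin n, (colf p, rowf p) = x → (colf q, rowf q) = x →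
      π p < π q → ((bx = true → p < q) ∧ (bx = false → q < p)) := by
    intro p q hp hq hlt
    have hcc : colf p = colf q := by rw [(hcellx p hp).1, (hcellx q hq).1]
    have hrr : rowf p = rowf q := by rw [(hcellx p hp).2, (hcellx q hq).2]
    constructor
    · intro hb
      rcases lt_trichotomy p q with h | h | h
      · exact h
      · exact absurd hlt (by rw [h]; exact lt_irrefl _)
      · exact absurd (hInc q p hcc.symm hrr.symm (by rw [hMeqx q hq, hb]) h)
          (asymm hlt)
    · intro hb
      rcases lt_trichotomy q p with h | h | h
      · exact h
      · exact absurd hlt (by rw [← h]; exact lt_irrefl _)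
      · exact absurd (hDec p q hcc hrr (by rw [hMeqx p hp, hb]) h) (asymm hlt)
  set B : Finset (Fin n) := Finset.univ.filter (fun q => (colf q, rowf q) = x) with hB
  have hmemB : ∀ q : Fin n, q ∈ B ↔ (colf q, rowf q) = x := by
    intro q; simp [hB]
  rcases halone with hrowalone | hcolalone
  · -- x is alone in its row; interleave along the column by position
    set A : Finset (Fin n) :=
      Finset.univ.filter (fun q => (colf q, rowf q) ∈ C' ∧ colf q = x.1) with hA
    have hmemA : ∀ q : Fin n, q ∈ A ↔ (colf q, rowf q) ∈ C' ∧ colf q = x.1 := by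
      intro q; simp [hA]
    have hABdisj : Disjoint A B := by
      rw [Finset.disjoint_left]
      intro q hqA hqB
      have h1 := (hmemA q).mp hqA
      have h2 := (hmemB q).mp hqB
      rw [h2] at h1
      exact (Finset.notMem_erase x C) h1.1
    obtain ⟨v, hvu, hv01, hvmono⟩ := interleave t' (fun q => q.val) A B hABdisj
      (fun q hq => ht'01 q ((hmemA q).mp hq).1)
      (fun q1 hq1 q2 hq2 hlt => ht'col q1 q2 ((hmemA q1).mp hq1).1 ((hmemA q2).mp hq2).1
        (((hmemA q1).mp hq1).2.trans ((hmemA q2).mp hq2).2.symm) hlt)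
    refine ⟨v, ?_, ?_, ?_⟩
    · intro p hp
      by_cases hpx : (colf p, rowf p) = x
      · exact hv01 p ((hmemB p).mpr hpx)
      · have hpC' : (colf p, rowf p) ∈ C' := Finset.mem_erase.mpr ⟨hpx, hp⟩
        rw [hvu p (fun h => hpx ((hmemB p).mp h))]
        exact ht'01 p hpC'
    · intro p q hp hq hcc hlt
      by_cases hpx : (colf p, rowf p) = x <;> by_cases hqx : (colf q, rowf q) = x
      · exact hvmono p (Finset.mem_union_right _ ((hmemB p).mpr hpx))
          q (Finset.mem_union_right _ ((hmemB q).mpr hqx)) hlt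
      · have hqC' : (colf q, rowf q) ∈ C' := Finset.mem_erase.mpr ⟨hqx, hq⟩
        have hqA : q ∈ A := (hmemA q).mpr ⟨hqC', by rw [← hcc, (hcellx p hpx).1]⟩
        exact hvmono p (Finset.mem_union_right _ ((hmemB p).mpr hpx))
          q (Finset.mem_union_left _ hqA) hlt
      · have hpC' : (colf p, rowf p) ∈ C' := Finset.mem_erase.mpr ⟨hpx, hp⟩
        have hpA : p ∈ A := (hmemA p).mpr ⟨hpC', by rw [hcc, (hcellx q hqx).1]⟩
        exact hvmono p (Finset.mem_union_left _ hpA)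
          q (Finset.mem_union_right _ ((hmemB q).mpr hqx)) hlt
      · have hpC' : (colf p, rowf p) ∈ C' := Finset.mem_erase.mpr ⟨hpx, hp⟩
        have hqC' : (colf q, rowf q) ∈ C' := Finset.mem_erase.mpr ⟨hqx, hq⟩
        rw [hvu p (fun h => hpx ((hmemB p).mp h)), hvu q (fun h => hqx ((hmemB q).mp h))]
        exact ht'col p q hpC' hqC' hcc hlt
    · intro p q hp hq hrr hlt
      by_cases hpx : (colf p, rowf p) = x
      · -- q must also be in cell x, by row-aloneness
        have hqx : (colf q, rowf q) = x := by
          apply hrowalone _ hq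
          rw [← hrr, (hcellx p hpx).2]
        have hpB := (hmemB p).mpr hpx
        have hqB := (hmemB q).mpr hqx
        rw [hMeqx p hpx, hMeqx q hqx]
        have hco := hcellord p q hpx hqx hlt
        cases bx with
        | true =>
          have hpq : p < q := hco.1 rfl
          simp only [if_pos rfl]
          exact hvmono p (Finset.mem_union_right _ hpB) q (Finset.mem_union_right _ hqB) hpq
        | false =>
          have hqp : q < p := hco.2 rfl
          simp only [if_neg (by simp : ¬(some false = some true))]
          have := hvmono q (Finset.mem_union_right _ hqB) p (Finset.mem_union_right _ hpB) hqp
          linarith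
      · by_cases hqx : (colf q, rowf q) = x
        · exfalso
          apply hpx
          apply hrowalone _ hp
          rw [hrr, (hcellx q hqx).2]
        · have hpC' : (colf p, rowf p) ∈ C' := Finset.mem_erase.mpr ⟨hpx, hp⟩
          have hqC' : (colf q, rowf q) ∈ C' := Finset.mem_erase.mpr ⟨hqx, hq⟩
          rw [hvu p (fun h => hpx ((hmemB p).mp h)), hvu q (fun h => hqx ((hmemB q).mp h))]
          exact ht'row p q hpC' hqC' hrr hlt
  · -- x is alone in its column; interleave along the row by value
    set A : Finset (Fin n) :=
      Finset.univ.filter (fun q => (colf q, rowf q) ∈ C' ∧ rowf q = x.2) with hA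
    have hmemA : ∀ q : Fin n, q ∈ A ↔ (colf q, rowf q) ∈ C' ∧ rowf q = x.2 := by
      intro q; simp [hA]
    have hABdisj : Disjoint A B := by
      rw [Finset.disjoint_left]
      intro q hqA hqB
      have h1 := (hmemA q).mp hqA
      have h2 := (hmemB q).mp hqB
      rw [h2] at h1
      exact (Finset.notMem_erase x C) h1.1
    set u : Fin n → ℝ := fun q => if M (colf q) (rowf q) = some true then t' q else 1 - t' q
      with hu
    obtain ⟨v, hvu, hv01, hvmono⟩ := interleave u (fun q => (π q).val) A B hABdisj
      (by
        intro q hq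
        have h01 := ht'01 q ((hmemA q).mp hq).1
        rw [hu]
        dsimp only
        split <;> constructor <;> linarith)
      (by
        intro q1 hq1 q2 hq2 hlt
        exact ht'row q1 q2 ((hmemA q1).mp hq1).1 ((hmemA q2).mp hq2).1
          (((hmemA q1).mp hq1).2.trans ((hmemA q2).mp hq2).2.symm) hlt)
    set t : Fin n → ℝ := fun p => if p ∈ B then (if bx = true then v p else 1 - v p) else t' p
      with ht
    have htB : ∀ p ∈ B, (if M (colf p) (rowf p) = some true then t p else 1 - t p) = v p := by
      intro p hp
      have hpx := (hmemB p).mp hp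
      rw [hMeqx p hpx, ht]
      dsimp only
      rw [if_pos hp]
      cases bx with
      | true => simp
      | false => simp
    have htA : ∀ p, p ∉ B → (if M (colf p) (rowf p) = some true then t p else 1 - t p) = u p := by
      intro p hp
      rw [ht, hu]
      dsimp only
      rw [if_neg hp]
    have htnotB : ∀ p, p ∉ B → t p = t' p := by
      intro p hp
      rw [ht]; dsimp only; rw [if_neg hp]
    refine ⟨t, ?_, ?_, ?_⟩
    · intro p hp
      by_cases hpx : (colf p, rowf p) = x
      · have hpB := (hmemB p).mpr hpx
        have h01 := hv01 p hpB
        rw [ht]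
        dsimp only
        rw [if_pos hpB]
        cases bx with
        | true => simpa using h01
        | false => constructor <;> simp <;> linarith [h01.1, h01.2]
      · have hpC' : (colf p, rowf p) ∈ C' := Finset.mem_erase.mpr ⟨hpx, hp⟩
        rw [htnotB p (fun h => hpx ((hmemB p).mp h))]
        exact ht'01 p hpC'
    · intro p q hp hq hcc hlt
      by_cases hpx : (colf p, rowf p) = x
      · have hqx : (colf q, rowf q) = x := by
          apply hcolalone _ hq
          rw [← hcc, (hcellx p hpx).1]
        have hpB := (hmemB p).mpr hpx
        have hqB := (hmemB q).mpr hqx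
        rw [ht]
        dsimp only
        rw [if_pos hpB, if_pos hqB]
        cases bx with
        | true =>
          have hπ : π p < π q := hInc p q hcc
            (by rw [(hcellx p hpx).2, (hcellx q hqx).2]) (by rw [hMeqx p hpx]) hlt
          have := hvmono p (Finset.mem_union_right _ hpB) q (Finset.mem_union_right _ hqB) hπ
          simpa using this
        | false =>
          have hπ : π q < π p := hDec p q hcc
            (by rw [(hcellx p hpx).2, (hcellx q hqx).2]) (by rw [hMeqx p hpx]) hlt
          have := hvmono q (Finset.mem_union_right _ hqB) p (Finset.mem_union_right _ hpB) hπ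
          simp only [if_neg (by simp : ¬(false = true))]
          linarith
      · by_cases hqx : (colf q, rowf q) = x
        · exfalso
          apply hpx
          apply hcolalone _ hp
          rw [hcc, (hcellx q hqx).1]
        · have hpC' : (colf p, rowf p) ∈ C' := Finset.mem_erase.mpr ⟨hpx, hp⟩
          have hqC' : (colf q, rowf q) ∈ C' := Finset.mem_erase.mpr ⟨hqx, hq⟩
          rw [htnotB p (fun h => hpx ((hmemB p).mp h)), htnotB q (fun h => hqx ((hmemB q).mp h))]
          exact ht'col p q hpC' hqC' hcc hlt
    · intro p q hp hq hrr hlt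
      by_cases hpx : (colf p, rowf p) = x <;> by_cases hqx : (colf q, rowf q) = x
      · have hpB := (hmemB p).mpr hpx
        have hqB := (hmemB q).mpr hqx
        rw [htB p hpB, htB q hqB]
        exact hvmono p (Finset.mem_union_right _ hpB) q (Finset.mem_union_right _ hqB) hlt
      · have hpB := (hmemB p).mpr hpx
        have hqC' : (colf q, rowf q) ∈ C' := Finset.mem_erase.mpr ⟨hqx, hq⟩
        have hqA : q ∈ A := (hmemA q).mpr ⟨hqC', by rw [← hrr, (hcellx p hpx).2]⟩
        have hqnB : q ∉ B := fun h => hqx ((hmemB q).mp h)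
        rw [htB p hpB, htA q hqnB]
        rw [← hvu q hqnB]
        exact hvmono p (Finset.mem_union_right _ hpB) q (Finset.mem_union_left _ hqA) hlt
      · have hqB := (hmemB q).mpr hqx
        have hpC' : (colf p, rowf p) ∈ C' := Finset.mem_erase.mpr ⟨hpx, hp⟩
        have hpA : p ∈ A := (hmemA p).mpr ⟨hpC', by rw [hrr, (hcellx q hqx).2]⟩
        have hpnB : p ∉ B := fun h => hpx ((hmemB p).mp h)
        rw [htB q hqB, htA p hpnB]
        rw [← hvu p hpnB]
        exact hvmono p (Finset.mem_union_left _ hpA) q (Finset.mem_union_right _ hqB) hlt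
      · have hpC' : (colf p, rowf p) ∈ C' := Finset.mem_erase.mpr ⟨hpx, hp⟩
        have hqC' : (colf q, rowf q) ∈ C' := Finset.mem_erase.mpr ⟨hqx, hq⟩
        have hpnB : p ∉ B := fun h => hpx ((hmemB p).mp h)
        have hqnB : q ∉ B := fun h => hqx ((hmemB q).mp h)
        rw [htnotB p hpnB, htnotB q hqnB]
        exact ht'row p q hpC' hqC' hrr hlt


lemma boundary_unique {m : ℕ} {c : Fin (m + 1) → ℕ} (hmono : Monotone c) {v : ℕ}
    {i i' : Fin m} (h1 : c i.castSucc ≤ v) (h2 : v < c i.succ)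
    (h3 : c i'.castSucc ≤ v) (h4 : v < c i'.succ) : i = i' := by
  by_contra hne
  rcases lt_or_gt_of_ne (fun h : i.val = i'.val => hne (Fin.ext h)) with h | h
  · have hle : (i.succ : Fin (m + 1)) ≤ i'.castSucc := by
      rw [Fin.le_def]; simpa using h
    have := hmono hle
    omega
  · have hle : (i'.succ : Fin (m + 1)) ≤ i.castSucc := by
      rw [Fin.le_def]; simpa using h
    have := hmono hle
    omega

lemma boundary_exists {m : ℕ} {c : Fin (m + 1) → ℕ} (hmono : Monotone c) {v N : ℕ}
    (h0 : c 0 = 0) (hlast : c (Fin.last m) = N) (hv : v < N) :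
    ∃ i : Fin m, c i.castSucc ≤ v ∧ v < c i.succ := by
  classical
  set s : Finset (Fin (m + 1)) := Finset.univ.filter (fun i => c i ≤ v) with hs
  have h0s : (0 : Fin (m + 1)) ∈ s := by simp [hs, h0]
  set im := s.max' ⟨0, h0s⟩ with him
  have hmem : im ∈ s := s.max'_mem _
  have h1 : c im ≤ v := (Finset.mem_filter.mp hmem).2
  have h2 : im ≠ Fin.last m := by
    intro h
    rw [h, hlast] at h1
    omega
  have hlt : im.val < m := by
    have := im.isLt
    rcases Nat.lt_succ_iff_lt_or_eq.mp this with h | h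
    · exact h
    · exact absurd (Fin.ext h) h2
  refine ⟨⟨im.val, hlt⟩, ?_, ?_⟩
  · have : (⟨im.val, hlt⟩ : Fin m).castSucc = im := Fin.ext rfl
    rw [this]
    exact h1
  · by_contra hcon
    push_neg at hcon
    have hmem' : (⟨im.val, hlt⟩ : Fin m).succ ∈ s := by
      simp only [hs, Finset.mem_filter, Finset.mem_univ, true_and]
      exact hcon
    have := s.le_max' _ hmem'
    rw [← him, Fin.le_def] at this
    simp at this

/-- If the cell graph of `M` is a tree (acyclic, and connected on the nonempty
entries), then `Geom(M) = Grid(M)`; in particular (for such acyclic `M`), every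
`M`-gridded permutation `π` admits a point set on the standard figure `Λ_M`, in general
position, isomorphic to the diagram of `π` and respecting the given gridding. -/
theorem geom_eq_grid_of_tree {k ℓ : ℕ} (M : GMatrix k ℓ)
    (hacyc : (cellGraph M).IsAcyclic)
    (hconn : ((cellGraph M).induce {x : Fin k × Fin ℓ | M x.1 x.2 ≠ none}).Connected) :
    (∀ n : ℕ, GeomClass M n = GridClass M n) ∧
    (∀ (n : ℕ) (π : Equiv.Perm (Fin n)) (c : Fin (k + 1) → ℕ) (r : Fin (ℓ + 1) → ℕ),
      IsGridding M π c r →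
      ∃ g : Fin n → ℝ × ℝ, (∀ p, g p ∈ stdFigure M) ∧
        (∀ p q : Fin n, p < q → (g p).1 < (g q).1) ∧
        (∀ p q : Fin n, π p < π q → (g p).2 < (g q).2) ∧
        ∀ (p : Fin n) (i : Fin k) (j : Fin ℓ), InCell c r π p i j →
          (i.val : ℝ) < (g p).1 ∧ (g p).1 < (i.val : ℝ) + 1 ∧
          (j.val : ℝ) < (g p).2 ∧ (g p).2 < (j.val : ℝ) + 1) := by
  classical
  have part2 : ∀ (n : ℕ) (π : Equiv.Perm (Fin n)) (c : Fin (k + 1) → ℕ) (r : Fin (ℓ + 1) → ℕ),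
      IsGridding M π c r →
      ∃ g : Fin n → ℝ × ℝ, (∀ p, g p ∈ stdFigure M) ∧
        (∀ p q : Fin n, p < q → (g p).1 < (g q).1) ∧
        (∀ p q : Fin n, π p < π q → (g p).2 < (g q).2) ∧
        ∀ (p : Fin n) (i : Fin k) (j : Fin ℓ), InCell c r π p i j →
          (i.val : ℝ) < (g p).1 ∧ (g p).1 < (i.val : ℝ) + 1 ∧
          (j.val : ℝ) < (g p).2 ∧ (g p).2 < (j.val : ℝ) + 1 := by
    intro n π c r hGrid
    obtain ⟨hcmono, hrmono, hc0, hclast, hr0, hrlast, hcells⟩ := hGrid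
    have hcellex : ∀ p : Fin n, ∃ i j, InCell c r π p i j := by
      intro p
      obtain ⟨i, hi1, hi2⟩ := boundary_exists hcmono hc0 hclast p.isLt
      obtain ⟨j, hj1, hj2⟩ := boundary_exists hrmono hr0 hrlast (π p).isLt
      exact ⟨i, j, hi1, hi2, hj1, hj2⟩
    choose colf rowf hcf using hcellex
    have huniq : ∀ (p : Fin n) (i : Fin k) (j : Fin ℓ), InCell c r π p i j →
        i = colf p ∧ j = rowf p := by
      intro p i j hp
      obtain ⟨h1, h2, h3, h4⟩ := hp
      obtain ⟨g1, g2, g3, g4⟩ := hcf p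
      exact ⟨boundary_unique hcmono h1 h2 g1 g2, boundary_unique hrmono h3 h4 g3 g4⟩
    have hMcell : ∀ p, M (colf p) (rowf p) ≠ none :=
      fun p => (hcells (colf p) (rowf p)).1 p (hcf p)
    have hInc : ∀ p q : Fin n, colf p = colf q → rowf p = rowf q →
        M (colf p) (rowf p) = some true → p < q → π p < π q := by
      intro p q hcc hrr hM hlt
      exact (hcells (colf p) (rowf p)).2.1 hM p q (hcf p) (by rw [hcc, hrr]; exact hcf q) hlt
    have hDec : ∀ p q : Fin n, colf p = colf q → rowf p = rowf q →
        M (colf p) (rowf p) = some false → p < q → π q < π p := by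
      intro p q hcc hrr hM hlt
      exact (hcells (colf p) (rowf p)).2.2 hM p q (hcf p) (by rw [hcc, hrr]; exact hcf q) hlt
    set C : Finset (Fin k × Fin ℓ) := Finset.univ.filter (fun x => M x.1 x.2 ≠ none) with hCdef
    obtain ⟨t, ht01, htcol, htrow⟩ := exists_t hacyc hconn π colf rowf hInc hDec C
      (by intro x hx; exact (Finset.mem_filter.mp hx).2)
    have hmemC : ∀ p, (colf p, rowf p) ∈ C := by
      intro p
      simp only [hCdef, Finset.mem_filter, Finset.mem_univ, true_and]
      exact hMcell p
    set sv : Fin n → ℝ := fun p => if M (colf p) (rowf p) = some true then t p else 1 - t p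
      with hsv
    have hs01 : ∀ p, 0 < sv p ∧ sv p < 1 := by
      intro p
      have h := ht01 p (hmemC p)
      rw [hsv]
      dsimp only
      split <;> constructor <;> linarith [h.1, h.2]
    set g : Fin n → ℝ × ℝ := fun p => ((colf p : ℝ) + t p, (rowf p : ℝ) + sv p) with hg
    have hcolmono : ∀ p q : Fin n, p < q → colf p ≤ colf q := by
      intro p q hlt
      by_contra hcon
      push_neg at hcon
      have hle : (colf q).succ ≤ (colf p).castSucc := by
        rw [Fin.le_def]
        simpa using hcon
      have h1 := (hcf q).2.1
      have h2 := (hcf p).1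
      have h3 := hcmono hle
      have h4 : p.val < q.val := hlt
      omega
    have hrowmono : ∀ p q : Fin n, π p < π q → rowf p ≤ rowf q := by
      intro p q hlt
      by_contra hcon
      push_neg at hcon
      have hle : (rowf q).succ ≤ (rowf p).castSucc := by
        rw [Fin.le_def]
        simpa using hcon
      have h1 := (hcf q).2.2.2
      have h2 := (hcf p).2.2.1
      have h3 := hrmono hle
      have h4 : (π p).val < (π q).val := hlt
      omega
    refine ⟨g, ?_, ?_, ?_, ?_⟩
    · intro p
      refine ⟨colf p, rowf p, t p, (ht01 p (hmemC p)).1, (ht01 p (hmemC p)).2, ?_⟩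
      rcases Option.ne_none_iff_exists'.mp (hMcell p) with ⟨b, hb⟩
      cases b
      · right
        refine ⟨hb, ?_⟩
        have hsvp : sv p = 1 - t p := if_neg (by simp [hb])
        have hgp : g p = ((colf p : ℝ) + t p, (rowf p : ℝ) + sv p) := rfl
        rw [hgp, hsvp, show (rowf p : ℝ) + (1 - t p) = (rowf p : ℝ) + 1 - t p from by ring]
      · left
        refine ⟨hb, ?_⟩
        have hsvp : sv p = t p := if_pos hb
        have hgp : g p = ((colf p : ℝ) + t p, (rowf p : ℝ) + sv p) := rfl
        rw [hgp, hsvp]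
    · intro p q hlt
      rcases eq_or_lt_of_le (hcolmono p q hlt) with heq | hltc
      · have h := htcol p q (hmemC p) (hmemC q) heq hlt
        rw [hg]
        dsimp only
        rw [heq]
        linarith
      · have hv : ((colf p).val + 1 : ℝ) ≤ ((colf q).val : ℝ) := by
          exact_mod_cast Nat.succ_le_of_lt hltc
        have h1 := ht01 p (hmemC p)
        have h2 := ht01 q (hmemC q)
        rw [hg]
        dsimp only
        linarith [h1.2, h2.1]
    · intro p q hlt
      rcases eq_or_lt_of_le (hrowmono p q hlt) with heq | hltc
      · have h := htrow p q (hmemC p) (hmemC q) heq hlt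
        rw [hg]
        dsimp only
        rw [heq]
        rw [show (if M (colf p) (rowf p) = some true then t p else 1 - t p) = sv p from rfl,
            show (if M (colf q) (rowf q) = some true then t q else 1 - t q) = sv q from rfl] at h
        linarith
      · have hv : ((rowf p).val + 1 : ℝ) ≤ ((rowf q).val : ℝ) := by
          exact_mod_cast Nat.succ_le_of_lt hltc
        have h1 := hs01 p
        have h2 := hs01 q
        rw [hg]
        dsimp only
        linarith [h1.2, h2.1]
    · intro p i j hp
      obtain ⟨hi, hj⟩ := huniq p i j hp
      subst hi
      subst hj
      have h1 := ht01 p (hmemC p)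
      have h2 := hs01 p
      rw [hg]
      dsimp only
      refine ⟨by linarith [h1.1], by linarith [h1.2], by linarith [h2.1], by linarith [h2.2]⟩
  refine ⟨?_, part2⟩
  intro n
  apply Set.Subset.antisymm
  · -- Geom ⊆ Grid
    intro π hπ
    obtain ⟨g, hfig, hgx, hgy⟩ := hπ
    choose fi fj ft ht0 ht1 hform using hfig
    set xc : Fin n → ℝ := fun p => (g p).1 with hxc
    set yc : Fin n → ℝ := fun p => (g p).2 with hyc
    have hxb : ∀ p, (fi p : ℝ) < xc p ∧ xc p < fi p + 1 := by
      intro p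
      rcases hform p with ⟨_, hp⟩ | ⟨_, hp⟩ <;>
        · have h := congrArg Prod.fst hp
          simp only at h
          rw [hxc]
          dsimp only
          rw [h]
          constructor <;> [linarith [ht0 p]; linarith [ht1 p]]
    have hyb : ∀ p, (fj p : ℝ) < yc p ∧ yc p < fj p + 1 := by
      intro p
      rcases hform p with ⟨_, hp⟩ | ⟨_, hp⟩ <;>
        · have h := congrArg Prod.snd hp
          simp only at h
          rw [hyc]
          dsimp only
          rw [h]
          constructor <;> [linarith [ht0 p, ht1 p]; linarith [ht0 p, ht1 p]]
    have hxlt : ∀ p q : Fin n, xc p < xc q ↔ p < q := by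
      intro p q
      constructor
      · intro h
        rcases lt_trichotomy p q with h' | h' | h'
        · exact h'
        · rw [h'] at h; exact absurd h (lt_irrefl _)
        · exact absurd (hgx q p h') (by rw [hxc] at h; dsimp only at h; exact not_lt_of_gt h)
      · exact hgx p q
    have hylt : ∀ p q : Fin n, yc p < yc q ↔ π p < π q := by
      intro p q
      constructor
      · intro h
        rcases lt_trichotomy (π p) (π q) with h' | h' | h'
        · exact h'
        · have : p = q := π.injective h'
          rw [this] at h; exact absurd h (lt_irrefl _)
        · exact absurd (hgy q p h') (by rw [hyc] at h; dsimp only at h; exact not_lt_of_gt h)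
      · exact hgy p q
    set cB : Fin (k + 1) → ℕ :=
      fun i => (Finset.univ.filter fun q => xc q < (i.val : ℝ)).card with hcB
    set rB : Fin (ℓ + 1) → ℕ :=
      fun j => (Finset.univ.filter fun q => yc q < (j.val : ℝ)).card with hrB
    have hcardx : ∀ p : Fin n, (Finset.univ.filter fun q => xc q < xc p).card = p.val := by
      intro p
      have : (Finset.univ.filter fun q => xc q < xc p) = Finset.Iio p := by
        ext q
        simp [Finset.mem_Iio, hxlt]
      rw [this, Fin.card_Iio]
    have hcardy : ∀ p : Fin n, (Finset.univ.filter fun q => yc q < yc p).card = (π p).val := by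
      intro p
      have h1 : (Finset.univ.filter fun q => yc q < yc p)
          = (Finset.Iio (π p)).map π.symm.toEmbedding := by
        ext q
        simp only [Finset.mem_filter, Finset.mem_univ, true_and, Finset.mem_map,
          Finset.mem_Iio, Equiv.coe_toEmbedding]
        rw [hylt]
        constructor
        · intro h
          exact ⟨π q, h, by simp⟩
        · rintro ⟨z, hz, rfl⟩
          simpa using hz
      rw [h1, Finset.card_map, Fin.card_Iio]
    have hcBmono : Monotone cB := by
      intro i i' hii
      apply Finset.card_le_card
      intro q hq
      rw [Finset.mem_filter] at hq ⊢
      refine ⟨hq.1, lt_of_lt_of_le hq.2 ?_⟩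
      exact_mod_cast (Fin.le_def.mp hii)
    have hrBmono : Monotone rB := by
      intro j j' hjj
      apply Finset.card_le_card
      intro q hq
      rw [Finset.mem_filter] at hq ⊢
      refine ⟨hq.1, lt_of_lt_of_le hq.2 ?_⟩
      exact_mod_cast (Fin.le_def.mp hjj)
    have hInCellself : ∀ p : Fin n, InCell cB rB π p (fi p) (fj p) := by
      intro p
      refine ⟨?_, ?_, ?_, ?_⟩
      · rw [← hcardx p]
        apply Finset.card_le_card
        intro q hq
        rw [Finset.mem_filter] at hq ⊢
        refine ⟨hq.1, ?_⟩
        have : ((fi p).castSucc.val : ℝ) = ((fi p).val : ℝ) := by norm_num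
        rw [this] at hq
        exact lt_trans hq.2 (hxb p).1
      · rw [← hcardx p]
        apply Finset.card_lt_card
        rw [Finset.ssubset_iff_of_subset]
        · refine ⟨p, ?_, ?_⟩
          · rw [Finset.mem_filter]
            refine ⟨Finset.mem_univ _, ?_⟩
            have : ((fi p).succ.val : ℝ) = ((fi p).val : ℝ) + 1 := by
              rw [Fin.val_succ]; push_cast; ring
            rw [this]
            exact (hxb p).2
          · rw [Finset.mem_filter]
            simp
        · intro q hq
          rw [Finset.mem_filter] at hq ⊢
          refine ⟨hq.1, ?_⟩
          have : ((fi p).succ.val : ℝ) = ((fi p).val : ℝ) + 1 := by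
            rw [Fin.val_succ]; push_cast; ring
          rw [this]
          exact lt_trans hq.2 (hxb p).2
      · rw [← hcardy p]
        apply Finset.card_le_card
        intro q hq
        rw [Finset.mem_filter] at hq ⊢
        refine ⟨hq.1, ?_⟩
        have : ((fj p).castSucc.val : ℝ) = ((fj p).val : ℝ) := by norm_num
        rw [this] at hq
        exact lt_trans hq.2 (hyb p).1
      · rw [← hcardy p]
        apply Finset.card_lt_card
        rw [Finset.ssubset_iff_of_subset]
        · refine ⟨p, ?_, ?_⟩
          · rw [Finset.mem_filter]
            refine ⟨Finset.mem_univ _, ?_⟩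
            have : ((fj p).succ.val : ℝ) = ((fj p).val : ℝ) + 1 := by
              rw [Fin.val_succ]; push_cast; ring
            rw [this]
            exact (hyb p).2
          · rw [Finset.mem_filter]
            simp
        · intro q hq
          rw [Finset.mem_filter] at hq ⊢
          refine ⟨hq.1, ?_⟩
          have : ((fj p).succ.val : ℝ) = ((fj p).val : ℝ) + 1 := by
            rw [Fin.val_succ]; push_cast; ring
          rw [this]
          exact lt_trans hq.2 (hyb p).2
    have hcelluniq : ∀ (p : Fin n) (i : Fin k) (j : Fin ℓ), InCell cB rB π p i j →
        i = fi p ∧ j = fj p := by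
      intro p i j hp
      obtain ⟨h1, h2, h3, h4⟩ := hp
      obtain ⟨g1, g2, g3, g4⟩ := hInCellself p
      exact ⟨boundary_unique hcBmono h1 h2 g1 g2, boundary_unique hrBmono h3 h4 g3 g4⟩
    refine ⟨cB, rB, hcBmono, hrBmono, ?_, ?_, ?_, ?_, ?_⟩
    · -- cB 0 = 0
      rw [hcB]
      dsimp only
      rw [Finset.card_eq_zero, Finset.filter_eq_empty_iff]
      intro q _
      have := (hxb q).1
      have h0 : (0 : ℝ) ≤ (fi q).val := by positivity
      simp only [Fin.val_zero, Nat.cast_zero]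
      linarith
    · -- cB last = n
      rw [hcB]
      dsimp only
      have : (Finset.univ.filter fun q => xc q < ((Fin.last k).val : ℕ)) = Finset.univ := by
        apply Finset.filter_true_of_mem
        intro q _
        have h1 := (hxb q).2
        have h2 : ((fi q).val : ℝ) + 1 ≤ (k : ℝ) := by
          exact_mod_cast Nat.succ_le_of_lt (fi q).isLt
        simp only [Fin.val_last]
        linarith
      rw [this, Finset.card_univ, Fintype.card_fin]
    · -- rB 0 = 0
      rw [hrB]
      dsimp only
      rw [Finset.card_eq_zero, Finset.filter_eq_empty_iff]
      intro q _
      have := (hyb q).1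
      have h0 : (0 : ℝ) ≤ (fj q).val := by positivity
      simp only [Fin.val_zero, Nat.cast_zero]
      linarith
    · -- rB last = n
      rw [hrB]
      dsimp only
      have : (Finset.univ.filter fun q => yc q < ((Fin.last ℓ).val : ℕ)) = Finset.univ := by
        apply Finset.filter_true_of_mem
        intro q _
        have h1 := (hyb q).2
        have h2 : ((fj q).val : ℝ) + 1 ≤ (ℓ : ℝ) := by
          exact_mod_cast Nat.succ_le_of_lt (fj q).isLt
        simp only [Fin.val_last]
        linarith
      rw [this, Finset.card_univ, Fintype.card_fin]
    · intro i j
      refine ⟨?_, ?_, ?_⟩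
      · intro p hp
        obtain ⟨hi, hj⟩ := hcelluniq p i j hp
        rw [hi, hj]
        rcases hform p with ⟨hM, _⟩ | ⟨hM, _⟩ <;> simp [hM]
      · intro hM p q hp hq hlt
        obtain ⟨hip, hjp⟩ := hcelluniq p i j hp
        obtain ⟨hiq, hjq⟩ := hcelluniq q i j hq
        rcases hform p with ⟨hMp, hgp⟩ | ⟨hMp, hgp⟩
        · rcases hform q with ⟨hMq, hgq⟩ | ⟨hMq, hgq⟩
          · -- both increasing
            have hfi : fi p = fi q := by rw [← hip, ← hiq]
            have hfj : fj p = fj q := by rw [← hjp, ← hjq]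
            have hxpq : xc p < xc q := hgx p q hlt
            have hxp := congrArg Prod.fst hgp
            have hxq := congrArg Prod.fst hgq
            have hyp := congrArg Prod.snd hgp
            have hyq := congrArg Prod.snd hgq
            simp only at hxp hxq hyp hyq
            rw [← hylt]
            rw [hxc] at hxpq
            dsimp only at hxpq
            rw [hxp, hxq, hfi] at hxpq
            rw [hyc]
            dsimp only
            rw [hyp, hyq, hfj]
            have : ft p < ft q := by
              have hc : ((fi q).val : ℝ) + ft p < ((fi q).val : ℝ) + ft q := hxpq
              linarith
            linarith
          · exfalso
            rw [← hiq, ← hjq, hM] at hMq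
            simp at hMq
        · exfalso
          rw [← hip, ← hjp, hM] at hMp
          simp at hMp
      · intro hM p q hp hq hlt
        obtain ⟨hip, hjp⟩ := hcelluniq p i j hp
        obtain ⟨hiq, hjq⟩ := hcelluniq q i j hq
        rcases hform p with ⟨hMp, hgp⟩ | ⟨hMp, hgp⟩
        · exfalso
          rw [← hip, ← hjp, hM] at hMp
          simp at hMp
        · rcases hform q with ⟨hMq, hgq⟩ | ⟨hMq, hgq⟩
          · exfalso
            rw [← hiq, ← hjq, hM] at hMq
            simp at hMq
          · -- both decreasing
            have hfi : fi p = fi q := by rw [← hip, ← hiq]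
            have hfj : fj p = fj q := by rw [← hjp, ← hjq]
            have hxpq : xc p < xc q := hgx p q hlt
            have hxp := congrArg Prod.fst hgp
            have hxq := congrArg Prod.fst hgq
            have hyp := congrArg Prod.snd hgp
            have hyq := congrArg Prod.snd hgq
            simp only at hxp hxq hyp hyq
            rw [← hylt]
            rw [hxc] at hxpq
            dsimp only at hxpq
            rw [hxp, hxq, hfi] at hxpq
            rw [hyc]
            dsimp only
            rw [hyp, hyq, hfj]
            have : ft p < ft q := by
              have hc : ((fi q).val : ℝ) + ft p < ((fi q).val : ℝ) + ft q := hxpq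
              linarith
            linarith
  · -- Grid ⊆ Geom
    intro π hπ
    obtain ⟨c, r, hGrid⟩ := hπ
    obtain ⟨g, h1, h2, h3, _⟩ := part2 n π c r hGrid
    exact ⟨g, h1, h2, h3⟩
end Peel
end
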